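/- arXiv:2603.26058 — 6 statements merged into one kernel-verified Lean document; each statement's English description precedes it below -/
import Mathlib

section
/- Let K be an algebraically closed field, f ∈ K[λ] a monic polynomial of degree n with distinct roots λ_1, …, λ_n, and r ∈ K[λ] with deg r < n. Suppose the resultant of f and r is nonzero (equivalently r(λ_i) ≠ 0 for all i). Then the group GL_n(K) acts simply transitively on the set of triples (x, v, v*) ∈ Mat_n(K) × K^n × (K^n)* satisfying: (1) the characteristic polynomial of x equals f, and (2) for all λ not a root of f, v*(λI − x)^{-1}v = r(λ)/f(λ); the action is (g, (x,v,v*)) ↦ (g x g^{-1}, g v, v* g^{-1}). In particular this set is nonempty and is a single free orbit. -/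
open Matrix Polynomial

/-- The condition on a triple `(x, v, v*)`: char-poly of `x` is `f`, and
`v* adj(λI − x) v = r(λ)` as polynomials. -/
def cond8 {K : Type*} [Field K] {n : ℕ} (f r : Polynomial K)
    (p : Matrix (Fin n) (Fin n) K × (Fin n → K) × (Fin n → K)) : Prop :=
  p.1.charpoly = f ∧
    (fun i => Polynomial.C (p.2.2 i)) ⬝ᵥ
      (((Polynomial.X : Polynomial K) • (1 : Matrix (Fin n) (Fin n) (Polynomial K)) -
        p.1.map Polynomial.C).adjugate.mulVec fun i => Polynomial.C (p.2.1 i)) = r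

/-- The conjugation action of `GL_n(K)` on triples `(x, v, v*)`. -/
noncomputable def act8 {K : Type*} [Field K] {n : ℕ} (g : GL (Fin n) K)
    (p : Matrix (Fin n) (Fin n) K × (Fin n → K) × (Fin n → K)) :
    Matrix (Fin n) (Fin n) K × (Fin n → K) × (Fin n → K) :=
  ((g : Matrix (Fin n) (Fin n) K) * p.1 * ((g⁻¹ : GL (Fin n) K) : Matrix (Fin n) (Fin n) K),
    (g : Matrix (Fin n) (Fin n) K).mulVec p.2.1,
    Matrix.vecMul p.2.2 ((g⁻¹ : GL (Fin n) K) : Matrix (Fin n) (Fin n) K))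

section Aux

variable {K : Type*} [Field K] {n : ℕ}

lemma smul_one_sub_eq_charmatrix (x : Matrix (Fin n) (Fin n) K) :
    (X : K[X]) • (1 : Matrix (Fin n) (Fin n) K[X]) - x.map C = charmatrix x := by
  ext i j
  by_cases h : i = j <;>
    simp [charmatrix_apply, Matrix.smul_apply, Matrix.one_apply, Matrix.diagonal_apply, h,
      Matrix.sub_apply, Matrix.map_apply]

lemma cond8_def (f r : K[X]) (x : Matrix (Fin n) (Fin n) K) (v w : Fin n → K) :
    cond8 f r (x, v, w) ↔ x.charpoly = f ∧
      (fun i => C (w i)) ⬝ᵥ ((charmatrix x).adjugate.mulVec fun i => C (v i)) = r := by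
  rw [cond8, smul_one_sub_eq_charmatrix]

lemma my_charmatrix_diagonal (d : Fin n → K) :
    charmatrix (Matrix.diagonal d) = Matrix.diagonal (fun i => X - C (d i)) := by
  ext i j
  by_cases h : i = j <;>
    simp [charmatrix_apply, Matrix.diagonal_apply, h]

lemma my_charpoly_diagonal (d : Fin n → K) :
    (Matrix.diagonal d).charpoly = ∏ i, (X - C (d i)) := by
  rw [Matrix.charpoly, my_charmatrix_diagonal, Matrix.det_diagonal]

lemma dot_adj_diagonal (d w v : Fin n → K) :
    (fun i => C (w i)) ⬝ᵥ ((charmatrix (Matrix.diagonal d)).adjugate.mulVec fun i => C (v i))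
      = ∑ i, C (w i * v i) * ∏ j ∈ Finset.univ.erase i, (X - C (d j)) := by
  rw [my_charmatrix_diagonal, Matrix.adjugate_diagonal]
  refine Finset.sum_congr rfl fun i _ => ?_
  simp [Matrix.mulVec_diagonal, _root_.map_mul]
  ring

lemma eval_lagrange_sum (lam : Fin n → K) (hlam : Function.Injective lam) (c : Fin n → K)
    (k : Fin n) :
    (∑ i, C (c i) * ∏ j ∈ Finset.univ.erase i, (X - C (lam j))).eval (lam k)
      = c k * ∏ j ∈ Finset.univ.erase k, (lam k - lam j) := by
  rw [eval_finset_sum, Finset.sum_eq_single k]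
  · simp [eval_prod]
  · intro i _ hik
    have hk : k ∈ Finset.univ.erase i := Finset.mem_erase.mpr ⟨Ne.symm hik, Finset.mem_univ k⟩
    rw [eval_mul, eval_prod, Finset.prod_eq_zero hk (by simp), mul_zero]
  · simp

lemma lagrange_prod_ne_zero (lam : Fin n → K) (hlam : Function.Injective lam) (k : Fin n) :
    ∏ j ∈ Finset.univ.erase k, (lam k - lam j) ≠ 0 := by
  rw [Finset.prod_ne_zero_iff]
  intro j hj
  have : j ≠ k := (Finset.mem_erase.mp hj).1
  exact sub_ne_zero.mpr fun h => this (hlam h.symm)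

lemma lagrange_unique (lam : Fin n → K) (hlam : Function.Injective lam) (c c' : Fin n → K)
    (h : ∑ i, C (c i) * ∏ j ∈ Finset.univ.erase i, (X - C (lam j))
       = ∑ i, C (c' i) * ∏ j ∈ Finset.univ.erase i, (X - C (lam j))) : c = c' := by
  funext k
  have := congrArg (eval (lam k)) h
  rw [eval_lagrange_sum lam hlam c k, eval_lagrange_sum lam hlam c' k] at this
  exact mul_right_cancel₀ (lagrange_prod_ne_zero lam hlam k) this

lemma lagrange_exists (lam : Fin n → K) (hlam : Function.Injective lam) (r : K[X])
    (hrdeg : r.degree < n) :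
    ∑ i, C (r.eval (lam i) / ∏ j ∈ Finset.univ.erase i, (lam i - lam j)) *
        ∏ j ∈ Finset.univ.erase i, (X - C (lam j)) = r := by
  set s : K[X] := ∑ i, C (r.eval (lam i) / ∏ j ∈ Finset.univ.erase i, (lam i - lam j)) *
        ∏ j ∈ Finset.univ.erase i, (X - C (lam j)) with hs
  have hsd : s.degree < n := by
    refine lt_of_le_of_lt (degree_sum_le _ _) ?_
    rw [Finset.sup_lt_iff (by exact_mod_cast WithBot.bot_lt_coe n)]
    intro i _
    refine lt_of_le_of_lt (degree_mul_le _ _) ?_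
    have h1 : (C (r.eval (lam i) / ∏ j ∈ Finset.univ.erase i, (lam i - lam j))).degree ≤ 0 :=
      degree_C_le
    have h3 : (∏ j ∈ Finset.univ.erase i, (X - C (lam j))).degree < (n : WithBot ℕ) := by
      refine lt_of_le_of_lt degree_le_natDegree ?_
      rw [Nat.cast_lt]
      have hle : (∏ j ∈ Finset.univ.erase i, (X - C (lam j))).natDegree
          ≤ (Finset.univ.erase i).card := by
        refine le_trans (natDegree_prod_le _ _) ?_
        simp [natDegree_X_sub_C]
      have hc : (Finset.univ.erase i).card = n - 1 := by simp [Finset.card_erase_of_mem]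
      have hn : 0 < n := i.pos
      omega
    calc (C _).degree + _ ≤ 0 + _ := add_le_add h1 le_rfl
      _ = _ := zero_add _
      _ < (n : WithBot ℕ) := h3
  have hzero : s - r = 0 := by
    by_cases hsr : s - r = 0
    · exact hsr
    refine Polynomial.eq_zero_of_natDegree_lt_card_of_eval_eq_zero _ hlam ?_ ?_
    · intro i
      rw [eval_sub, eval_lagrange_sum lam hlam _ i,
        div_mul_cancel₀ _ (lagrange_prod_ne_zero lam hlam i), sub_self]
    · rw [Fintype.card_fin]
      have : (s - r).degree < n := lt_of_le_of_lt (degree_sub_le _ _) (max_lt hsd hrdeg)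
      exact (natDegree_lt_iff_degree_lt hsr).mpr this
  exact sub_eq_zero.mp hzero

lemma charmatrix_map_eval (x : Matrix (Fin n) (Fin n) K) (t : K) :
    (charmatrix x).map (evalRingHom t) = t • (1 : Matrix (Fin n) (Fin n) K) - x := by
  ext i j
  by_cases h : i = j <;>
    simp [charmatrix_apply, Matrix.diagonal_apply, h, Matrix.map_apply, Matrix.sub_apply,
      Matrix.smul_apply, Matrix.one_apply]

lemma eval_dot (t : K) (P : Matrix (Fin n) (Fin n) K[X]) (w v : Fin n → K) :
    Polynomial.eval t ((fun i => C (w i)) ⬝ᵥ (P.mulVec fun i => C (v i)))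
      = w ⬝ᵥ ((P.map (evalRingHom t)).mulVec v) := by
  simp only [dotProduct, Matrix.mulVec, eval_finset_sum, eval_mul, eval_C, Matrix.map_apply,
    coe_evalRingHom]

lemma cond8_eval (x : Matrix (Fin n) (Fin n) K) (v w : Fin n → K) (r : K[X])
    (h : (fun i => C (w i)) ⬝ᵥ ((charmatrix x).adjugate.mulVec fun i => C (v i)) = r) (t : K) :
    w ⬝ᵥ ((t • (1 : Matrix (Fin n) (Fin n) K) - x).adjugate.mulVec v) = r.eval t := by
  have := congrArg (eval t) h
  rw [eval_dot] at this
  rw [← this]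
  congr 1
  rw [show (charmatrix x).adjugate.map (evalRingHom t)
      = ((evalRingHom t).mapMatrix (charmatrix x)).adjugate from by
    rw [← RingHom.map_adjugate]; rfl]
  rw [RingHom.mapMatrix_apply, charmatrix_map_eval]

lemma det_smul_one_sub (x : Matrix (Fin n) (Fin n) K) (t : K) :
    (t • (1 : Matrix (Fin n) (Fin n) K) - x).det = x.charpoly.eval t := by
  rw [Matrix.charpoly, ← charmatrix_map_eval x t, ← RingHom.mapMatrix_apply, ← RingHom.map_det,
    coe_evalRingHom]

lemma act8_mul (g h : GL (Fin n) K) (p : Matrix (Fin n) (Fin n) K × (Fin n → K) × (Fin n → K)) :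
    act8 (g * h) p = act8 g (act8 h p) := by
  simp only [act8, _root_.mul_inv_rev, Units.val_mul, Matrix.mulVec_mulVec,
    Matrix.vecMul_vecMul, mul_assoc]

lemma act8_one (p : Matrix (Fin n) (Fin n) K × (Fin n → K) × (Fin n → K)) : act8 1 p = p := by
  simp [act8]

lemma cond8_act (f r : K[X]) (g : GL (Fin n) K)
    (p : Matrix (Fin n) (Fin n) K × (Fin n → K) × (Fin n → K)) (hp : cond8 f r p) :
    cond8 f r (act8 g p) := by
  obtain ⟨x, v, w⟩ := p
  rw [cond8_def] at hp
  obtain ⟨h1, h2⟩ := hp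
  set a : Matrix (Fin n) (Fin n) K := (g : Matrix (Fin n) (Fin n) K) with ha
  set a' : Matrix (Fin n) (Fin n) K := ((g⁻¹ : GL (Fin n) K) : Matrix (Fin n) (Fin n) K) with ha'
  have haa' : a * a' = 1 := by rw [ha, ha', ← Units.val_mul, mul_inv_cancel, Units.val_one]
  have ha'a : a' * a = 1 := by rw [ha, ha', ← Units.val_mul, inv_mul_cancel, Units.val_one]
  set A := a.map C with hA
  set A' := a'.map C with hA'
  have hAA' : A * A' = 1 := by
    rw [hA, hA', ← Matrix.map_mul, haa', Matrix.map_one C C.map_zero C.map_one]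
  have hA'A : A' * A = 1 := by
    rw [hA, hA', ← Matrix.map_mul, ha'a, Matrix.map_one C C.map_zero C.map_one]
  have key : charmatrix (a * x * a') = A * charmatrix x * A' := by
    rw [← smul_one_sub_eq_charmatrix, ← smul_one_sub_eq_charmatrix, Matrix.map_mul,
      Matrix.map_mul, mul_sub, sub_mul]
    congr 1
    rw [Matrix.mul_smul, Matrix.mul_one, Matrix.smul_mul, hAA']
  have hdet : A.det * A'.det = 1 := by rw [← Matrix.det_mul, hAA', Matrix.det_one]
  have hdet' : A'.det * A.det = 1 := by rw [← Matrix.det_mul, hA'A, Matrix.det_one]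
  have hcp : (a * x * a').charpoly = x.charpoly := by
    rw [Matrix.charpoly, Matrix.charpoly, key, Matrix.det_mul, Matrix.det_mul, mul_comm A.det,
      mul_assoc, hdet, mul_one]
  show cond8 f r (a * x * a', a.mulVec v, Matrix.vecMul w a')
  rw [cond8_def]
  refine ⟨hcp.trans h1, ?_⟩
  have hadj : (charmatrix (a * x * a')).adjugate
      = A'.adjugate * ((charmatrix x).adjugate * A.adjugate) := by
    rw [key, Matrix.adjugate_mul_distrib, Matrix.adjugate_mul_distrib]
  have hw : (fun i => C ((Matrix.vecMul w a') i)) = Matrix.vecMul (fun i => C (w i)) A' := by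
    funext i
    simp [Matrix.vecMul, dotProduct, hA', Matrix.map_apply, map_sum, _root_.map_mul]
  have hv : (fun i => C ((a.mulVec v) i)) = A.mulVec (fun i => C (v i)) := by
    funext i
    simp [Matrix.mulVec, dotProduct, hA, Matrix.map_apply, map_sum, _root_.map_mul]
  rw [hadj, hw, hv, Matrix.dotProduct_mulVec, Matrix.dotProduct_mulVec, Matrix.vecMul_vecMul,
    Matrix.vecMul_vecMul]
  have hcollapse : A' * (A'.adjugate * ((charmatrix x).adjugate * A.adjugate) * A)
      = (charmatrix x).adjugate := by
    have hassoc : A' * (A'.adjugate * ((charmatrix x).adjugate * A.adjugate) * A)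
        = (A' * A'.adjugate) * (charmatrix x).adjugate * (A.adjugate * A) := by
      noncomm_ring
    rw [hassoc, Matrix.mul_adjugate, Matrix.adjugate_mul, Matrix.smul_mul, Matrix.one_mul,
      Matrix.smul_mul, Matrix.mul_smul, Matrix.mul_one, smul_smul, hdet', one_smul]
  rw [hcollapse, ← Matrix.dotProduct_mulVec, h2]

lemma vecMul_smul_one (c : K) (u : Fin n → K) :
    Matrix.vecMul u (c • (1 : Matrix (Fin n) (Fin n) K)) = c • u := by
  funext j
  simp [Matrix.vecMul, dotProduct, Matrix.smul_apply, Matrix.one_apply, mul_comm]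

lemma exists_g (lam : Fin n → K) (hlam : Function.Injective lam) (f r : K[X])
    (hf : f = ∏ i, (X - C (lam i))) (hres : ∀ i, r.eval (lam i) ≠ 0)
    (x : Matrix (Fin n) (Fin n) K) (v w : Fin n → K)
    (h1 : x.charpoly = f)
    (h2 : (fun i => C (w i)) ⬝ᵥ ((charmatrix x).adjugate.mulVec fun i => C (v i)) = r) :
    ∃ g : GL (Fin n) K,
      (g : Matrix (Fin n) (Fin n) K) * x * ((g⁻¹ : GL (Fin n) K) : Matrix (Fin n) (Fin n) K)
        = Matrix.diagonal lam ∧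
      (g : Matrix (Fin n) (Fin n) K).mulVec v = fun _ => 1 := by
  classical
  set u : Fin n → Fin n → K :=
    fun i => Matrix.vecMul w (Matrix.adjugate (lam i • 1 - x)) with hu
  have heval : ∀ i, u i ⬝ᵥ v = r.eval (lam i) := by
    intro i
    rw [hu, ← Matrix.dotProduct_mulVec]
    exact cond8_eval x v w r h2 (lam i)
  have hdet0 : ∀ i, (lam i • (1 : Matrix (Fin n) (Fin n) K) - x).det = 0 := by
    intro i
    rw [det_smul_one_sub, h1, hf, eval_prod]
    exact Finset.prod_eq_zero (Finset.mem_univ i) (by simp)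
  have hvec : ∀ i, Matrix.vecMul (u i) x = lam i • u i := by
    intro i
    have h0 : Matrix.vecMul (u i) (lam i • (1 : Matrix (Fin n) (Fin n) K) - x) = 0 := by
      rw [hu, Matrix.vecMul_vecMul, Matrix.adjugate_mul, hdet0]
      simp [Matrix.vecMul_zero]
    rw [Matrix.vecMul_sub, sub_eq_zero, vecMul_smul_one] at h0
    exact h0.symm
  set a : Matrix (Fin n) (Fin n) K := Matrix.of fun i => (r.eval (lam i))⁻¹ • u i with haa
  have hav : a.mulVec v = fun _ => 1 := by
    funext i
    show a i ⬝ᵥ v = 1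
    have : a i = (r.eval (lam i))⁻¹ • u i := rfl
    rw [this, smul_dotProduct, heval, smul_eq_mul, inv_mul_cancel₀ (hres i)]
  have hrow : ∀ i, Matrix.vecMul (a i) x = lam i • a i := by
    intro i
    have : a i = (r.eval (lam i))⁻¹ • u i := rfl
    rw [this, Matrix.smul_vecMul, hvec, smul_comm]
  have hne : ∀ i, a i ≠ 0 := by
    intro i h0
    have h1' : a i ⬝ᵥ v = 1 := congrFun hav i
    rw [h0, zero_dotProduct] at h1'
    exact zero_ne_one h1'
  have hli : LinearIndependent K (fun i => a i) := by
    apply Module.End.eigenvectors_linearIndependent' (Matrix.mulVecLin xᵀ) lam hlam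
    intro i
    refine ⟨?_, hne i⟩
    rw [Module.End.mem_eigenspace_iff]
    show xᵀ.mulVec (a i) = lam i • a i
    rw [Matrix.mulVec_transpose, hrow]
  have hU : IsUnit a := Matrix.linearIndependent_rows_iff_isUnit.mp hli
  refine ⟨hU.unit, ?_, ?_⟩
  · have hg : (hU.unit : Matrix (Fin n) (Fin n) K) = a := hU.unit_spec
    have hginv : a * ((hU.unit⁻¹ : GL (Fin n) K) : Matrix (Fin n) (Fin n) K) = 1 :=
      hU.mul_val_inv
    have hax : a * x = Matrix.diagonal lam * a := by
      ext i j
      rw [Matrix.mul_apply, Matrix.diagonal_mul]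
      have := congrFun (hrow i) j
      simpa [Matrix.vecMul, dotProduct] using this
    rw [hg, hax, mul_assoc, hginv, mul_one]
  · rw [hU.unit_spec, hav]

lemma stab_triv (lam : Fin n → K) (hlam : Function.Injective lam) (w0 : Fin n → K)
    (h : GL (Fin n) K)
    (hh : act8 h (Matrix.diagonal lam, (fun _ => (1 : K)), w0)
        = (Matrix.diagonal lam, (fun _ => (1 : K)), w0)) :
    h = 1 := by
  have h1 : (h : Matrix (Fin n) (Fin n) K) * Matrix.diagonal lam *
      ((h⁻¹ : GL (Fin n) K) : Matrix (Fin n) (Fin n) K) = Matrix.diagonal lam :=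
    congrArg Prod.fst hh
  have h2 : (h : Matrix (Fin n) (Fin n) K).mulVec (fun _ => (1 : K)) = fun _ => 1 :=
    congrArg (fun p => p.2.1) hh
  have hinv : ((h⁻¹ : GL (Fin n) K) : Matrix (Fin n) (Fin n) K) * (h : Matrix (Fin n) (Fin n) K)
      = 1 := by rw [← Units.val_mul, inv_mul_cancel, Units.val_one]
  have hcomm : (h : Matrix (Fin n) (Fin n) K) * Matrix.diagonal lam
      = Matrix.diagonal lam * (h : Matrix (Fin n) (Fin n) K) := by
    have e1 : ((h : Matrix (Fin n) (Fin n) K) * Matrix.diagonal lam *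
        ((h⁻¹ : GL (Fin n) K) : Matrix (Fin n) (Fin n) K)) * (h : Matrix (Fin n) (Fin n) K)
        = (h : Matrix (Fin n) (Fin n) K) * Matrix.diagonal lam := by
      rw [mul_assoc ((h : Matrix (Fin n) (Fin n) K) * Matrix.diagonal lam), hinv, mul_one]
    rw [h1] at e1
    exact e1.symm
  have hoff : ∀ i j, i ≠ j → (h : Matrix (Fin n) (Fin n) K) i j = 0 := by
    intro i j hij
    have := congrFun (congrFun hcomm i) j
    rw [Matrix.mul_diagonal, Matrix.diagonal_mul] at this
    have hne : lam j - lam i ≠ 0 := sub_ne_zero.mpr fun e => hij (hlam e).symm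
    have hz : (h : Matrix (Fin n) (Fin n) K) i j * (lam j - lam i) = 0 := by
      linear_combination this
    exact (mul_eq_zero.mp hz).resolve_right hne
  have hdiag : ∀ i, (h : Matrix (Fin n) (Fin n) K) i i = 1 := by
    intro i
    have := congrFun h2 i
    simp only [Matrix.mulVec, dotProduct, mul_one] at this
    rwa [Finset.sum_eq_single i (fun j _ hj => hoff i j (Ne.symm hj)) (by simp)] at this
  refine Units.ext ?_
  show (h : Matrix (Fin n) (Fin n) K) = ((1 : GL (Fin n) K) : Matrix (Fin n) (Fin n) K)
  rw [Units.val_one]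
  ext i j
  by_cases hij : i = j
  · subst hij; rw [hdiag, Matrix.one_apply_eq]
  · rw [hoff i j hij, Matrix.one_apply_ne hij]

lemma canonical_orbit (lam : Fin n → K) (hlam : Function.Injective lam) (f r : K[X])
    (hf : f = ∏ i, (X - C (lam i))) (hrdeg : r.degree < n) (hres : ∀ i, r.eval (lam i) ≠ 0)
    (p : Matrix (Fin n) (Fin n) K × (Fin n → K) × (Fin n → K)) (hp : cond8 f r p) :
    ∃ g : GL (Fin n) K, act8 g p = (Matrix.diagonal lam, (fun _ => (1 : K)),
      fun i => r.eval (lam i) / ∏ j ∈ Finset.univ.erase i, (lam i - lam j)) := by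
  obtain ⟨x, v, w⟩ := p
  set w0 : Fin n → K := fun i => r.eval (lam i) / ∏ j ∈ Finset.univ.erase i, (lam i - lam j)
    with hw0
  rw [cond8_def] at hp
  obtain ⟨g, hg1, hg2⟩ := exists_g lam hlam f r hf hres x v w hp.1 hp.2
  refine ⟨g, ?_⟩
  have hact : cond8 f r (act8 g (x, v, w)) :=
    cond8_act f r g (x, v, w) ((cond8_def f r x v w).mpr hp)
  have hform : act8 g (x, v, w) = (Matrix.diagonal lam, (fun _ => (1 : K)),
      Matrix.vecMul w ((g⁻¹ : GL (Fin n) K) : Matrix (Fin n) (Fin n) K)) := by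
    rw [act8, hg1, hg2]
  rw [hform] at hact ⊢
  rw [cond8_def] at hact
  have hw2 := hact.2
  rw [dot_adj_diagonal] at hw2
  have hexist : ∑ i, C (w0 i) * ∏ j ∈ Finset.univ.erase i, (X - C (lam j)) = r := by
    rw [hw0]
    exact lagrange_exists lam hlam r hrdeg
  have hcs : (fun i => Matrix.vecMul w ((g⁻¹ : GL (Fin n) K) : Matrix (Fin n) (Fin n) K) i * 1)
      = w0 := lagrange_unique lam hlam _ w0 (hw2.trans hexist.symm)
  have hvw : Matrix.vecMul w ((g⁻¹ : GL (Fin n) K) : Matrix (Fin n) (Fin n) K) = w0 := by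
    funext i
    have := congrFun hcs i
    simpa [mul_one] using this
  rw [hvw]

end Aux

/-- For `f` monic with distinct roots and `r` of degree `< n` with nonzero resultant with `f`,
the set of triples `(x, v, v*)` with `charpoly x = f` and `v* adj(λI−x) v = r` is a single
free orbit of `GL_n(K)`: it is nonempty and the action on it is simply transitive. -/
theorem stmt_8 (K : Type*) [Field K] [IsAlgClosed K] (n : ℕ)
    (lam : Fin n → K) (hlam : Function.Injective lam)
    (f r : Polynomial K)
    (hf : f = ∏ i, (Polynomial.X - Polynomial.C (lam i)))
    (hrdeg : r.degree < n)
    (hres : ∀ i, r.eval (lam i) ≠ 0) :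
    {p : Matrix (Fin n) (Fin n) K × (Fin n → K) × (Fin n → K) | cond8 f r p}.Nonempty ∧
      ∀ p ∈ {p | cond8 f r p}, ∀ q ∈ {p | cond8 f r p},
        ∃! g : GL (Fin n) K, act8 g p = q := by
  classical
  set w0 : Fin n → K := fun i => r.eval (lam i) / ∏ j ∈ Finset.univ.erase i, (lam i - lam j)
    with hw0
  set p0 : Matrix (Fin n) (Fin n) K × (Fin n → K) × (Fin n → K) :=
    (Matrix.diagonal lam, (fun _ => (1 : K)), w0) with hp0def
  have hp0 : cond8 f r p0 := by
    rw [hp0def, cond8_def]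
    refine ⟨by rw [my_charpoly_diagonal, hf], ?_⟩
    rw [dot_adj_diagonal]
    have := lagrange_exists lam hlam r hrdeg
    rw [hw0]
    simpa [mul_one] using this
  have hcanon : ∀ p, cond8 f r p → ∃ g : GL (Fin n) K, act8 g p = p0 :=
    fun p hp => canonical_orbit lam hlam f r hf hrdeg hres p hp
  have hstab : ∀ h : GL (Fin n) K, act8 h p0 = p0 → h = 1 :=
    fun h hh => stab_triv lam hlam w0 h hh
  constructor
  · exact ⟨p0, hp0⟩
  · intro p hp q hq
    obtain ⟨gp, hgp⟩ := hcanon p hp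
    obtain ⟨gq, hgq⟩ := hcanon q hq
    have hback : act8 gp⁻¹ p0 = p := by
      rw [← hgp, ← act8_mul, inv_mul_cancel, act8_one]
    have hbackq : act8 gq⁻¹ p0 = q := by
      rw [← hgq, ← act8_mul, inv_mul_cancel, act8_one]
    refine ⟨gq⁻¹ * gp, ?_, ?_⟩
    · show act8 (gq⁻¹ * gp) p = q
      rw [act8_mul, hgp, hbackq]
    · intro y hy
      replace hy : act8 y p = q := hy
      have hfix : act8 (gq * y * gp⁻¹) p0 = p0 := by
        rw [act8_mul, act8_mul, hback, hy, hgq]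
      have h1 := hstab _ hfix
      have hy2 : y = gq⁻¹ * (gq * y * gp⁻¹) * gp := by group
      rw [hy2, h1]
      group
end

section
/- Let K be an algebraically closed field, f monic of degree n with distinct roots λ_1, …, λ_n, and r of degree < n with r(λ_i) ≠ 0 for all i. If (x, v, v*) satisfies char-poly(x) = f and v* adj(λI − x) v = r(λ), and x = g·diag(λ_1,…,λ_n)·g^{-1}, then for each i, (v* g)_i (g^{-1} v)_i = r(λ_i) / ∏_{j≠i} (λ_i − λ_j), and in particular both (v* g)_i and (g^{-1} v)_i are nonzero for every i. -/
open Matrix Polynomial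

/-- If `charpoly x = f = ∏ (λ − λᵢ)` with distinct roots, `v* adj(λI − x) v = r(λ)`
with `r(λᵢ) ≠ 0`, and `x = g diag(λ) g⁻¹`, then
`(v* g)ᵢ (g⁻¹ v)ᵢ = r(λᵢ)/∏_{j≠i}(λᵢ − λⱼ)` and both factors are nonzero. -/
theorem stmt_9 (K : Type*) [Field K] [IsAlgClosed K] (n : ℕ)
    (lam : Fin n → K) (hlam : Function.Injective lam)
    (f r : Polynomial K)
    (hf : f = ∏ i, (Polynomial.X - Polynomial.C (lam i)))
    (hrdeg : r.degree < n)
    (hres : ∀ i, r.eval (lam i) ≠ 0)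
    (x : Matrix (Fin n) (Fin n) K) (v vstar : Fin n → K)
    (hchar : x.charpoly = f)
    (hadj : (fun i => Polynomial.C (vstar i)) ⬝ᵥ
      (((Polynomial.X : Polynomial K) • (1 : Matrix (Fin n) (Fin n) (Polynomial K)) -
        x.map Polynomial.C).adjugate.mulVec fun i => Polynomial.C (v i)) = r)
    (g : GL (Fin n) K)
    (hx : x = (g : Matrix (Fin n) (Fin n) K) * Matrix.diagonal lam *
      ((g⁻¹ : GL (Fin n) K) : Matrix (Fin n) (Fin n) K)) :
    ∀ i : Fin n,
      (Matrix.vecMul vstar (g : Matrix (Fin n) (Fin n) K)) i *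
          (((g⁻¹ : GL (Fin n) K) : Matrix (Fin n) (Fin n) K).mulVec v) i =
        r.eval (lam i) / ∏ j ∈ Finset.univ.erase i, (lam i - lam j) ∧
      (Matrix.vecMul vstar (g : Matrix (Fin n) (Fin n) K)) i ≠ 0 ∧
      (((g⁻¹ : GL (Fin n) K) : Matrix (Fin n) (Fin n) K).mulVec v) i ≠ 0 := by
  intro i
  set G : Matrix (Fin n) (Fin n) K := (g : Matrix (Fin n) (Fin n) K) with hG
  set Gi : Matrix (Fin n) (Fin n) K := ((g⁻¹ : GL (Fin n) K) : Matrix (Fin n) (Fin n) K) with hGi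
  have hGGi : G * Gi = 1 := by
    rw [hG, hGi, ← Units.val_mul, mul_inv_cancel g, Units.val_one]
  have hGiG : Gi * G = 1 := by
    rw [hG, hGi, ← Units.val_mul, inv_mul_cancel g, Units.val_one]
  set w : Fin n → K := Matrix.vecMul vstar G with hw
  set u : Fin n → K := Gi.mulVec v with hu
  -- evaluate hadj at lam i
  have key : r.eval (lam i) =
      vstar ⬝ᵥ ((lam i • (1 : Matrix (Fin n) (Fin n) K) - x).adjugate.mulVec v) := by
    have hmap : (RingHom.mapMatrix (evalRingHom (lam i)))
        ((Polynomial.X : Polynomial K) • (1 : Matrix (Fin n) (Fin n) (Polynomial K)) -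
          x.map Polynomial.C) = lam i • 1 - x := by
      ext j k
      simp [Matrix.one_apply, apply_ite]
    have := congrArg (Polynomial.eval (lam i)) hadj
    rw [← this]
    rw [← hmap, ← RingHom.map_adjugate]
    simp [dotProduct, Matrix.mulVec, Finset.mul_sum, eval_finset_sum, eval_mul, eval_C]
  -- rewrite the matrix as conjugated diagonal
  have hdiag : lam i • (1 : Matrix (Fin n) (Fin n) K) - x =
      G * Matrix.diagonal (fun j => lam i - lam j) * Gi := by
    have h1 : lam i • (1 : Matrix (Fin n) (Fin n) K) =
        G * (lam i • (1 : Matrix (Fin n) (Fin n) K)) * Gi := by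
      rw [Matrix.mul_smul, Matrix.mul_one, Matrix.smul_mul, hGGi]
    rw [hx, h1]
    rw [← Matrix.sub_mul, ← Matrix.mul_sub]
    congr 1
    congr 1
    ext j k
    by_cases h : j = k <;> simp [Matrix.diagonal, Matrix.one_apply, h]
  -- adjugate of conjugate
  have hadjG : G.adjugate = G.det • Gi := by
    have h2 := Matrix.mul_adjugate G
    have := congrArg (fun M => Gi * M) h2
    simp only [← Matrix.mul_assoc, hGiG, Matrix.one_mul] at this
    rw [this, Matrix.mul_smul, Matrix.mul_one]
  have hadjGi : Gi.adjugate = Gi.det • G := by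
    have h2 := Matrix.mul_adjugate Gi
    have := congrArg (fun M => G * M) h2
    simp only [← Matrix.mul_assoc, hGGi, Matrix.one_mul] at this
    rw [this, Matrix.mul_smul, Matrix.mul_one]
  have hdet1 : Gi.det * G.det = 1 := by
    rw [← Matrix.det_mul, hGiG, Matrix.det_one]
  have hdet1' : G.det * Gi.det = 1 := by
    rw [← Matrix.det_mul, hGGi, Matrix.det_one]
  have hconj : (G * Matrix.diagonal (fun j => lam i - lam j) * Gi).adjugate =
      G * Matrix.diagonal (fun j => ∏ k ∈ Finset.univ.erase j, (lam i - lam k)) * Gi := by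
    rw [Matrix.adjugate_mul_distrib, Matrix.adjugate_mul_distrib, hadjG, hadjGi,
      Matrix.adjugate_diagonal]
    simp only [Matrix.mul_smul, Matrix.smul_mul, smul_smul, hdet1, hdet1', one_smul, Matrix.mul_assoc]
  -- compute the dot product
  have key2 : r.eval (lam i) = w i * u i * ∏ k ∈ Finset.univ.erase i, (lam i - lam k) := by
    rw [key, hdiag, hconj]
    rw [← Matrix.mulVec_mulVec, ← Matrix.mulVec_mulVec, Matrix.dotProduct_mulVec, ← hw, ← hu]
    rw [show w ⬝ᵥ (Matrix.diagonal (fun j => ∏ k ∈ Finset.univ.erase j, (lam i - lam k))).mulVec u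
        = ∑ j, w j * ((∏ k ∈ Finset.univ.erase j, (lam i - lam k)) * u j) by
      simp [dotProduct, Matrix.mulVec_diagonal]]
    rw [Finset.sum_eq_single i]
    · ring
    · intro j _ hj
      rw [Finset.prod_eq_zero (Finset.mem_erase.mpr ⟨(Ne.symm hj), Finset.mem_univ i⟩)
        (sub_self (lam i))]
      ring
    · intro h; exact absurd (Finset.mem_univ i) h
  have hprod : (∏ k ∈ Finset.univ.erase i, (lam i - lam k)) ≠ 0 := by
    apply Finset.prod_ne_zero_iff.mpr
    intro k hk
    have : k ≠ i := (Finset.mem_erase.mp hk).1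
    exact sub_ne_zero_of_ne fun h => this (hlam h.symm)
  have hwu : w i * u i ≠ 0 := by
    intro h
    apply hres i
    rw [key2, h, zero_mul]
  refine ⟨?_, fun h => hwu (by rw [h, zero_mul]), fun h => hwu (by rw [h, mul_zero])⟩
  field_simp
  rw [key2]
end

section
/- Let V be a 2N-dimensional symplectic vector space over the finite field F_q with q odd, and let Heis(V) = V × F_q be the Heisenberg group with multiplication (v, a)(w, b) = (v + w, a + b + ω(v, w)/2). For any nontrivial additive character ψ : F_q → ℂ^×, any irreducible complex representation of Heis(V) on which the center {0} × F_q acts by ψ has dimension q^N. -/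
/-- Any irreducible complex representation of the Heisenberg group
`Heis(V) = V × F_q` (with `(v,a)(w,b) = (v+w, a+b+ω(v,w)/2)`, `V` a `2N`-dimensional
symplectic space over `F_q`, `q` odd) on which the center `{0} × F_q` acts by a
nontrivial additive character `ψ` has dimension `q^N`. -/
theorem stmt_13 (kf V G W : Type*) [Field kf] [Fintype kf]
    [AddCommGroup V] [Module kf V] [FiniteDimensional kf V]
    (N : ℕ) (hdim : Module.finrank kf V = 2 * N)
    (h2 : (2 : kf) ≠ 0)
    (ω : V →ₗ[kf] V →ₗ[kf] kf)
    (halt : ∀ v : V, ω v v = 0)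
    (hnd : ∀ v : V, (∀ w : V, ω v w = 0) → v = 0)
    [Group G] (e : G ≃ V × kf)
    (hmul : ∀ g h : G,
      e (g * h) = ((e g).1 + (e h).1, (e g).2 + (e h).2 + ω (e g).1 (e h).1 / 2))
    (ψ : kf → ℂ) (hψadd : ∀ a b : kf, ψ (a + b) = ψ a * ψ b)
    (hψnt : ψ ≠ fun _ => 1)
    [AddCommGroup W] [Module ℂ W] [Nontrivial W]
    (ρ : G →* (W →ₗ[ℂ] W))
    (hirr : ∀ U : Submodule ℂ W, (∀ g : G, ∀ w ∈ U, ρ g w ∈ U) → U = ⊥ ∨ U = ⊤)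
    (hcen : ∀ a : kf, ∀ w : W, ρ (e.symm (0, a)) w = ψ a • w) :
    Module.finrank ℂ W = Fintype.card kf ^ N := by
  classical
  haveI : NeZero (2 : kf) := ⟨h2⟩
  have hfinV : Finite V := Module.finite_of_finite kf
  have hfinG : Finite G := Finite.of_equiv _ e.symm
  haveI : Fintype V := Fintype.ofFinite V
  haveI : Fintype G := Fintype.ofFinite G
  -- `e 1 = (0, 0)`
  have he1 : e 1 = ((0 : V), (0 : kf)) := by
    have h := hmul 1 1
    rw [mul_one] at h
    have h1 : (e 1).1 = (e 1).1 + (e 1).1 := congrArg Prod.fst h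
    have hfst : (e 1).1 = 0 := by
      have := (left_eq_add).mp h1; exact this
    have h2' : (e 1).2 = (e 1).2 + (e 1).2 + ω (e 1).1 (e 1).1 / 2 := congrArg Prod.snd h
    rw [halt, zero_div, add_zero] at h2'
    have hsnd : (e 1).2 = 0 := (left_eq_add).mp h2'
    exact Prod.ext hfst hsnd
  -- multiplication rule for `e.symm`
  have hsymm_mul : ∀ p q : V × kf,
      e.symm p * e.symm q = e.symm (p.1 + q.1, p.2 + q.2 + ω p.1 q.1 / 2) := by
    intro p q
    apply e.injective
    rw [hmul]
    simp
  -- the unitaries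
  set U : V → (W →ₗ[ℂ] W) := fun v => ρ (e.symm (v, 0)) with hUdef
  have hU0 : U 0 = 1 := by
    have : e.symm ((0 : V), (0 : kf)) = 1 := by
      apply e.injective; simp [he1]
    simp only [hUdef, this, map_one]
  have hρ : ∀ (v : V) (a : kf), ρ (e.symm (v, a)) = ψ a • U v := by
    intro v a
    have hsplit : e.symm (v, (0 : kf)) * e.symm ((0 : V), a) = e.symm (v, a) := by
      rw [hsymm_mul]; simp
    ext w
    rw [← hsplit, map_mul]
    simp only [Module.End.mul_apply, hcen, map_smul, LinearMap.smul_apply]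
    rfl
  have hU : ∀ v w : V, U v * U w = ψ (ω v w / 2) • U (v + w) := by
    intro v w
    have : e.symm (v, (0:kf)) * e.symm (w, (0:kf)) = e.symm (v + w, ω v w / 2) := by
      rw [hsymm_mul]; simp
    calc U v * U w = ρ (e.symm (v + w, ω v w / 2)) := by rw [hUdef, ← map_mul, this]
    _ = ψ (ω v w / 2) • U (v + w) := hρ _ _
  -- ψ basics
  have hψ0 : ψ 0 = 1 := by
    obtain ⟨w0, hw0⟩ := exists_ne (0 : W)
    have hc := hcen 0 w0
    have h1 : e.symm ((0:V), (0:kf)) = 1 := by apply e.injective; simp [he1]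
    rw [h1, map_one] at hc
    have : ((ψ 0 - 1) : ℂ) • w0 = 0 := by
      rw [sub_smul, one_smul, ← hc]
      simp
    rcases smul_eq_zero.mp this with h | h
    · exact sub_eq_zero.mp h
    · exact absurd h hw0
  have hψne : ∀ a : kf, ψ a ≠ 0 := by
    intro a ha
    have := hψadd a (-a)
    rw [add_neg_cancel, hψ0, ha, zero_mul] at this
    exact one_ne_zero this
  -- antisymmetry
  have hanti : ∀ v w : V, ω w v = -ω v w := by
    intro v w
    have h := halt (v + w)
    simp only [map_add, LinearMap.add_apply, halt, zero_add, add_zero] at h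
    linear_combination h
  -- inverses
  have hUinv : ∀ v : V, U v * U (-v) = 1 := by
    intro v
    rw [hU]
    have hz : ω v (-v) = 0 := by rw [map_neg, halt, neg_zero]
    rw [hz, zero_div, hψ0, add_neg_cancel, hU0, one_smul]
  have hUinv' : ∀ v : V, U (-v) * U v = 1 := by
    intro v
    have := hUinv (-v)
    rwa [neg_neg] at this
  -- conjugation
  have hconj : ∀ w v : V, U w * U v * U (-w) = ψ (ω w v) • U v := by
    intro w v
    rw [hU w v, smul_mul_assoc, hU (w + v) (-w)]
    have h1 : ω (w + v) (-w) = ω w v := by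
      have hav := hanti v w
      simp only [map_add, LinearMap.add_apply, map_neg, halt, neg_zero, zero_add]
      linear_combination -hav
    have hvv : w + v + -w = v := by abel
    rw [h1, hvv, smul_smul, ← hψadd, add_halves]
  -- trace vanishing off the identity component
  have htr0 : ∀ v : V, v ≠ 0 → LinearMap.trace ℂ W (U v) = 0 := by
    intro v hv
    obtain ⟨s, hs⟩ : ∃ s : kf, ψ s ≠ 1 := by
      by_contra hcon
      push_neg at hcon
      exact hψnt (funext fun a => hcon a)
    obtain ⟨u, hu⟩ : ∃ u : V, ω v u ≠ 0 := by
      by_contra hcon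
      push_neg at hcon
      exact hv (hnd v hcon)
    have hu' : ω u v ≠ 0 := by
      rw [hanti v u]
      exact neg_ne_zero.mpr hu
    set w : V := (s / ω u v) • u with hw
    have hwv : ω w v = s := by
      rw [hw, map_smul, LinearMap.smul_apply, smul_eq_mul, div_mul_cancel₀ _ hu']
    have hinv' : U (-w) * U w = 1 := hUinv' w
    have t1 : LinearMap.trace ℂ W (U w * U v * U (-w)) = LinearMap.trace ℂ W (U v) := by
      rw [LinearMap.trace_mul_comm, ← mul_assoc, hinv', one_mul]
    have t2 : LinearMap.trace ℂ W (U w * U v * U (-w)) = ψ s * LinearMap.trace ℂ W (U v) := by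
      rw [hconj, hwv, map_smul, smul_eq_mul]
    rw [t1] at t2
    by_contra hne
    exact hs (mul_right_cancel₀ hne (by linear_combination -t2))
  -- finite dimensionality
  haveI hfd : FiniteDimensional ℂ W := by
    obtain ⟨w0, hw0⟩ := exists_ne (0 : W)
    set S : Submodule ℂ W := Submodule.span ℂ (Set.range fun g : G => ρ g w0) with hSdef
    have hinvS : ∀ g : G, ∀ w ∈ S, ρ g w ∈ S := by
      intro g w hw
      have hmap : Submodule.map (ρ g) S ≤ S := by
        rw [hSdef, Submodule.map_span]
        refine Submodule.span_le.mpr ?_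
        rintro x ⟨y, ⟨h, rfl⟩, rfl⟩
        exact Submodule.subset_span ⟨g * h, by simp [map_mul]⟩
      exact hmap ⟨w, hw, rfl⟩
    have hStop : S = ⊤ := by
      rcases hirr S hinvS with h | h
      · exfalso
        have hmem : w0 ∈ S := Submodule.subset_span ⟨1, by simp⟩
        rw [h] at hmem
        exact hw0 (by simpa using hmem)
      · exact h
    have : FiniteDimensional ℂ S := FiniteDimensional.span_of_finite ℂ (Set.finite_range _)
    exact Module.Finite.equiv (LinearEquiv.ofTop S hStop)
  set d : ℕ := Module.finrank ℂ W with hd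
  have hdpos : 0 < d := Module.finrank_pos
  have hdne : (d : ℂ) ≠ 0 := Nat.cast_ne_zero.mpr hdpos.ne'
  -- Schur's lemma
  have hschur : ∀ T : W →ₗ[ℂ] W, (∀ g : G, ρ g * T = T * ρ g) →
      ∃ c : ℂ, T = c • (1 : W →ₗ[ℂ] W) := by
    intro T hT
    obtain ⟨c, hc⟩ := Module.End.exists_eigenvalue T
    obtain ⟨x, hx⟩ := hc.exists_hasEigenvector
    refine ⟨c, ?_⟩
    set K := LinearMap.ker (T - c • (1 : W →ₗ[ℂ] W)) with hK
    have hcomm : ∀ g : G, (T - c • 1) * ρ g = ρ g * (T - c • 1) := by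
      intro g
      rw [sub_mul, mul_sub, hT g]
      congr 1
      rw [smul_mul_assoc, mul_smul_comm, one_mul, mul_one]
    have hinvK : ∀ g : G, ∀ w ∈ K, ρ g w ∈ K := by
      intro g w hw
      rw [hK, LinearMap.mem_ker] at hw ⊢
      calc (T - c • 1) (ρ g w) = ((T - c • 1) * ρ g) w := rfl
        _ = (ρ g * (T - c • 1)) w := by rw [hcomm]
        _ = ρ g ((T - c • 1) w) := rfl
        _ = 0 := by rw [hw, map_zero]
    have hKtop : K = ⊤ := by
      rcases hirr K hinvK with h | h
      · exfalso
        have hxK : x ∈ K := by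
          rw [hK, LinearMap.mem_ker, LinearMap.sub_apply, LinearMap.smul_apply,
            Module.End.one_apply, hx.apply_eq_smul, sub_self]
        rw [h] at hxK
        exact hx.2 (by simpa using hxK)
      · exact h
    ext w
    have hwK : w ∈ K := hKtop ▸ Submodule.mem_top
    rw [hK, LinearMap.mem_ker, LinearMap.sub_apply] at hwK
    exact sub_eq_zero.mp hwK
  -- every ρ g is a scalar multiple of some U v
  have hψρ : ∀ g : G, ρ g = ψ ((e g).2) • U ((e g).1) := by
    intro g
    have h := hρ (e g).1 (e g).2
    rwa [Prod.mk.eta, e.symm_apply_apply] at h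
  -- the averaging operator is scalar
  have havg : ∀ A : W →ₗ[ℂ] W,
      (∑ v : V, U v * A * U (-v)) =
        (((Fintype.card V : ℂ) * LinearMap.trace ℂ W A) / (d : ℂ)) • (1 : W →ₗ[ℂ] W) := by
    intro A
    set Φ : W →ₗ[ℂ] W := ∑ v : V, U v * A * U (-v) with hΦ
    have hterm : ∀ w v : V, U w * (U v * A * U (-v)) * U (-w)
        = U (w + v) * A * U (-(w + v)) := by
      intro w v
      have e1 : U w * (U v * A * U (-v)) * U (-w)
          = (U w * U v) * A * (U (-v) * U (-w)) := by
        simp only [mul_assoc]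
      rw [e1, hU w v, hU (-v) (-w)]
      have hnn : ω (-v) (-w) = ω v w := by simp
      rw [hnn]
      have hsc : ψ (ω w v / 2) * ψ (ω v w / 2) = 1 := by
        rw [← hψadd]
        have hz : ω w v / 2 + ω v w / 2 = 0 := by
          rw [hanti v w]; ring
        rw [hz, hψ0]
      have hind : -v + -w = -(w + v) := by abel
      rw [hind]
      rw [smul_mul_assoc, smul_mul_assoc, mul_smul_comm, smul_smul, hsc, one_smul]
    have hconjΦ : ∀ w : V, U w * Φ * U (-w) = Φ := by
      intro w
      rw [hΦ, Finset.mul_sum, Finset.sum_mul]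
      calc (∑ v : V, U w * (U v * A * U (-v)) * U (-w))
          = ∑ v : V, U (w + v) * A * U (-(w + v)) :=
            Finset.sum_congr rfl fun v _ => hterm w v
        _ = ∑ v : V, U v * A * U (-v) :=
            Fintype.sum_equiv (Equiv.addLeft w) _ _ (fun v => rfl)
    have hcommU : ∀ w : V, U w * Φ = Φ * U w := by
      intro w
      calc U w * Φ = U w * Φ * (U (-w) * U w) := by rw [hUinv' w, mul_one]
        _ = (U w * Φ * U (-w)) * U w := by simp only [mul_assoc]
        _ = Φ * U w := by rw [hconjΦ]
    have hcommρ : ∀ g : G, ρ g * Φ = Φ * ρ g := by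
      intro g
      rw [hψρ g, smul_mul_assoc, hcommU, mul_smul_comm]
    obtain ⟨c, hc⟩ := hschur Φ hcommρ
    have htrΦ : LinearMap.trace ℂ W Φ
        = (Fintype.card V : ℂ) * LinearMap.trace ℂ W A := by
      rw [hΦ, map_sum]
      have htr : ∀ v : V, LinearMap.trace ℂ W (U v * A * U (-v))
          = LinearMap.trace ℂ W A := by
        intro v
        rw [LinearMap.trace_mul_comm, ← mul_assoc, hUinv' v, one_mul]
      rw [Finset.sum_congr rfl fun v _ => htr v, Finset.sum_const, Finset.card_univ,
        nsmul_eq_mul]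
    have hctrace : c * (d : ℂ) = (Fintype.card V : ℂ) * LinearMap.trace ℂ W A := by
      rw [← htrΦ, hc, map_smul, LinearMap.trace_one, smul_eq_mul, hd]
    rw [hc]
    congr 1
    field_simp
    linear_combination hctrace
  -- extract the dimension using matrix coefficients
  let b := Module.finBasis ℂ W
  have htrace_eq : ∀ f : W →ₗ[ℂ] W,
      LinearMap.trace ℂ W f = ∑ i, b.coord i (f (b i)) := by
    intro f
    rw [LinearMap.trace_eq_matrix_trace ℂ b, Matrix.trace]
    refine Finset.sum_congr rfl fun i _ => ?_
    rw [Matrix.diag_apply, LinearMap.toMatrix_apply, Module.Basis.coord_apply]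
  have hentry : ∀ i j : Fin (Module.finrank ℂ W),
      (∑ v : V, (b.coord j (U (-v) (b j))) * (b.coord i (U v (b i))))
        = ((Fintype.card V : ℂ) * (b.coord j (b i)) / (d : ℂ)) * (b.coord i (b j)) := by
    intro i j
    have hA := havg (dualTensorHom ℂ W W (b.coord j ⊗ₜ[ℂ] b i))
    have htrA : LinearMap.trace ℂ W (dualTensorHom ℂ W W (b.coord j ⊗ₜ[ℂ] b i))
        = b.coord j (b i) := by
      rw [LinearMap.trace_eq_contract_apply, contractLeft_apply]
    have happ := congrArg (fun T : W →ₗ[ℂ] W => b.coord i (T (b j))) hA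
    simp only [LinearMap.sum_apply, Module.End.mul_apply, dualTensorHom_apply,
      map_smul, map_sum, smul_eq_mul, LinearMap.smul_apply, Module.End.one_apply] at happ
    rw [htrA] at happ
    linear_combination happ
  have hgrand : ∑ v : V, (LinearMap.trace ℂ W (U (-v))) * (LinearMap.trace ℂ W (U v))
      = ∑ j : Fin (Module.finrank ℂ W), ∑ i : Fin (Module.finrank ℂ W),
          ((Fintype.card V : ℂ) * (b.coord j (b i)) / (d : ℂ)) * (b.coord i (b j)) := by
    calc ∑ v : V, (LinearMap.trace ℂ W (U (-v))) * (LinearMap.trace ℂ W (U v))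
        = ∑ v : V, ∑ j, ∑ i, (b.coord j (U (-v) (b j))) * (b.coord i (U v (b i))) := by
          refine Finset.sum_congr rfl fun v _ => ?_
          rw [htrace_eq, htrace_eq, Finset.sum_mul_sum]
      _ = ∑ j, ∑ i, ∑ v : V, (b.coord j (U (-v) (b j))) * (b.coord i (U v (b i))) := by
          rw [Finset.sum_comm]
          exact Finset.sum_congr rfl fun j _ => Finset.sum_comm
      _ = ∑ j, ∑ i, ((Fintype.card V : ℂ) * (b.coord j (b i)) / (d : ℂ)) * (b.coord i (b j)) :=
          Finset.sum_congr rfl fun j _ => Finset.sum_congr rfl fun i _ => hentry i j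
  have hLHS : ∑ v : V, (LinearMap.trace ℂ W (U (-v))) * (LinearMap.trace ℂ W (U v))
      = (d : ℂ) * (d : ℂ) := by
    rw [Finset.sum_eq_single (0 : V)]
    · rw [neg_zero, hU0, LinearMap.trace_one]
    · intro v _ hv
      rw [htr0 v hv, mul_zero]
    · intro h
      exact absurd (Finset.mem_univ _) h
  have hco : ∀ i j : Fin (Module.finrank ℂ W),
      b.coord i (b j) = if j = i then 1 else 0 := by
    intro i j
    rw [Module.Basis.coord_apply, Module.Basis.repr_self, Finsupp.single_apply]
  have hRHS : ∑ j : Fin (Module.finrank ℂ W), ∑ i : Fin (Module.finrank ℂ W),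
      ((Fintype.card V : ℂ) * (b.coord j (b i)) / (d : ℂ)) * (b.coord i (b j))
        = (Fintype.card V : ℂ) := by
    have hinner : ∀ j : Fin (Module.finrank ℂ W),
        ∑ i, ((Fintype.card V : ℂ) * (b.coord j (b i)) / (d : ℂ)) * (b.coord i (b j))
          = (Fintype.card V : ℂ) / (d : ℂ) := by
      intro j
      rw [Finset.sum_eq_single j]
      · rw [hco j j]
        simp
      · intro i _ hij
        rw [hco i j]
        simp [Ne.symm hij]
      · intro h
        exact absurd (Finset.mem_univ _) h
    rw [Finset.sum_congr rfl fun j _ => hinner j, Finset.sum_const, Finset.card_univ,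
      Fintype.card_fin, nsmul_eq_mul]
    rw [← hd]
    field_simp
  have hdd : (d : ℂ) * (d : ℂ) = (Fintype.card V : ℂ) := by
    rw [← hLHS, hgrand, hRHS]
  have hcardV : Fintype.card V = Fintype.card kf ^ (2 * N) := by
    rw [Module.card_eq_pow_finrank (K := kf) (V := V), hdim]
  have hnat : d * d = Fintype.card kf ^ N * Fintype.card kf ^ N := by
    have hc : ((d * d : ℕ) : ℂ) = ((Fintype.card kf ^ N * Fintype.card kf ^ N : ℕ) : ℂ) := by
      push_cast
      rw [hdd, hcardV]
      push_cast
      rw [two_mul, pow_add]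
    exact_mod_cast hc
  have hfin : d = Fintype.card kf ^ N := by
    exact (Nat.mul_self_inj).mp hnat
  rw [hd] at hfin
  exact hfin
end

section
/- Let O = k[[t]], F = k((t)), and fix integers a_1 ≥ ⋯ ≥ a_n. Suppose x_{ij} ∈ O for 1 ≤ i, j ≤ n satisfy x_{ij} − x_{ji} ∈ t^{a_i + a_j} O whenever a_i, a_j ≥ 1. Let r = max{i : a_i ≥ 1}. Then there exists a symmetric matrix Y = (y_{ij}) ∈ Mat_n(O) with y_{ij} = 0 for i, j > r such that x_{ij} − y_{ij} ∈ t^{a_i} O for all i ≤ r and all j (equivalently: after subtracting the symmetric matrix Y, the entries t^{-a_j} (x_{ij} − y_{ij}) lie in O for all i, j with j ≤ r or i ≤ r). -/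
/-- Given `a_1 ≥ ⋯ ≥ a_n` and `x_{ij} ∈ O = k[[t]]` with `x_{ij} − x_{ji} ∈ t^{a_i+a_j} O`
whenever `a_i, a_j ≥ 1`, and `r` the number of indices with `a_i ≥ 1`, there is a symmetric
matrix `Y` over `O`, vanishing on the block with both indices `> r`, such that
`x_{ij} − y_{ij} ∈ t^{a_i} O` for all `i ≤ r` and all `j`. -/
theorem stmt_16 (k : Type*) [Field k] (n : ℕ) (a : Fin n → ℤ) (ha : Antitone a)
    (x : Matrix (Fin n) (Fin n) (PowerSeries k))
    (hx : ∀ i j : Fin n, 1 ≤ a i → 1 ≤ a j →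
      ∃ z : PowerSeries k, x i j - x j i = PowerSeries.X ^ (a i + a j).toNat * z)
    (r : ℕ) (hr : ∀ i : Fin n, (i : ℕ) < r ↔ 1 ≤ a i) :
    ∃ Y : Matrix (Fin n) (Fin n) (PowerSeries k), Y.IsSymm ∧
      (∀ i j : Fin n, r ≤ (i : ℕ) → r ≤ (j : ℕ) → Y i j = 0) ∧
      ∀ i j : Fin n, (i : ℕ) < r →
        ∃ z : PowerSeries k, x i j - Y i j = PowerSeries.X ^ (a i).toNat * z := by
  refine ⟨fun i j => if (i : ℕ) ≤ j then (if (i : ℕ) < r then x i j else 0)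
      else (if (j : ℕ) < r then x j i else 0), ?_, ?_, ?_⟩
  · unfold Matrix.IsSymm
    funext i j
    show (if (j : ℕ) ≤ i then (if (j : ℕ) < r then x j i else 0)
        else (if (i : ℕ) < r then x i j else 0)) = _
    rcases lt_trichotomy (i : ℕ) (j : ℕ) with h | h | h
    · rw [if_pos h.le, if_neg (not_le.2 h)]
    · have : i = j := Fin.ext h
      subst this; rfl
    · rw [if_neg (not_le.2 h), if_pos h.le]
  · intro i j hi hj
    simp only
    split <;> split <;> first | rfl | omega
  · intro i j hi
    by_cases hij : (i : ℕ) ≤ j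
    · simp only [if_pos hij, if_pos hi]
      exact ⟨0, by ring⟩
    · push_neg at hij
      have hjr : (j : ℕ) < r := lt_trans hij hi
      simp only [if_neg (not_le.2 hij), if_pos hjr]
      have hai : 1 ≤ a i := (hr i).1 hi
      have haj : 1 ≤ a j := (hr j).1 hjr
      obtain ⟨z, hz⟩ := hx i j hai haj
      refine ⟨PowerSeries.X ^ ((a i + a j).toNat - (a i).toNat) * z, ?_⟩
      rw [hz, ← mul_assoc, ← pow_add]
      congr 2
      omega
end

section
/- Let A = ℂ[a, e_1, …, e_n] be a graded polynomial ring with deg a = 2 and deg e_i = 2i, and let B be a graded A-algebra which as a graded A-module is B = A ⊕ (⊕_{k≥1} A·x_k) ⊕ (⊕_{k≥1} A·y_k) with deg x_k = deg y_k = km (m ≥ 1 fixed), such that x_k·x_l ∈ A·x_{k+l} ∖ {0}, y_k·y_l ∈ A·y_{k+l} ∖ {0}, and x_1·y_1 = a^n + e_1 a^{n−1} + ⋯ + e_n. Then each x_k is a nonzero scalar multiple of x_1^k, each y_k is a nonzero scalar multiple of y_1^k, and B is isomorphic as a graded ℂ-algebra to ℂ[a, e_1, …, e_{n−1}, x, y]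 where x = x_1, y = y_1 (i.e., B is a polynomial ring on a, e_1, …, e_{n−1}, x, y, with e_n = xy − a^n − e_1 a^{n−1} − ⋯ − e_{n−1} a eliminated). -/
open MvPolynomial

set_option maxHeartbeats 2000000 in
/-- Let `A = ℂ[a, e₁, …, eₙ]` and let `B` be a commutative graded `A`-algebra, free as an
`A`-module on `{1} ∪ {x_k}_{k≥1} ∪ {y_k}_{k≥1}`, with `x_k x_l` and `y_k y_l` nonzero
scalar multiples of `x_{k+l}` resp. `y_{k+l}` (forced by degree reasons), and
`x₁ y₁ = aⁿ + e₁ a^{n-1} + ⋯ + eₙ`. Then `x_k` (resp. `y_k`) is a nonzero scalar multiple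
of `x₁^k` (resp. `y₁^k`), and `B ≅ ℂ[a, e₁, …, e_{n-1}, x, y]` as a `ℂ`-algebra, sending
the generators `a, e₁, …, e_{n-1}, x₁, y₁` to the corresponding variables. -/
theorem stmt_18 (n m : ℕ) (hn : 0 < n) (hm : 0 < m)
    (B : Type*) [CommRing B] [Algebra ℂ B]
    [Algebra (MvPolynomial (Fin (n + 1)) ℂ) B]
    [IsScalarTower ℂ (MvPolynomial (Fin (n + 1)) ℂ) B]
    (x y : ℕ → B)
    (bas : Module.Basis (Unit ⊕ ℕ ⊕ ℕ) (MvPolynomial (Fin (n + 1)) ℂ) B)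
    (hb1 : bas (Sum.inl ()) = 1)
    (hbx : ∀ k : ℕ, bas (Sum.inr (Sum.inl k)) = x (k + 1))
    (hby : ∀ k : ℕ, bas (Sum.inr (Sum.inr k)) = y (k + 1))
    (hx : ∀ k l : ℕ, 1 ≤ k → 1 ≤ l → ∃ c : ℂ, c ≠ 0 ∧ x k * x l = c • x (k + l))
    (hy : ∀ k l : ℕ, 1 ≤ k → 1 ≤ l → ∃ c : ℂ, c ≠ 0 ∧ y k * y l = c • y (k + l))
    (hxy : x 1 * y 1 = algebraMap (MvPolynomial (Fin (n + 1)) ℂ) B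
      (MvPolynomial.X 0 ^ n +
        ∑ i : Fin n, MvPolynomial.X i.succ * MvPolynomial.X 0 ^ (n - 1 - (i : ℕ)))) :
    (∀ k : ℕ, 1 ≤ k → ∃ c : ℂ, c ≠ 0 ∧ x k = c • x 1 ^ k) ∧
    (∀ k : ℕ, 1 ≤ k → ∃ c : ℂ, c ≠ 0 ∧ y k = c • y 1 ^ k) ∧
    ∃ ψ : B ≃ₐ[ℂ] MvPolynomial (Fin (n + 2)) ℂ,
      ψ (algebraMap (MvPolynomial (Fin (n + 1)) ℂ) B (MvPolynomial.X 0)) =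
        MvPolynomial.X (0 : Fin (n + 2)) ∧
      (∀ i : Fin n, (i : ℕ) + 1 < n →
        ψ (algebraMap (MvPolynomial (Fin (n + 1)) ℂ) B (MvPolynomial.X i.succ)) =
          MvPolynomial.X i.succ.castSucc) ∧
      ψ (x 1) = MvPolynomial.X (⟨n, by omega⟩ : Fin (n + 2)) ∧
      ψ (y 1) = MvPolynomial.X (⟨n + 1, by omega⟩ : Fin (n + 2)) := by
  obtain ⟨ν, rfl⟩ : ∃ ν, n = ν + 1 := ⟨n - 1, by omega⟩
  clear hn hm
  haveI : Nontrivial B := nontrivial_of_ne 1 0 (hb1 ▸ bas.ne_zero (Sum.inl ()))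
  have hxne : ∀ k : ℕ, x (k + 1) ≠ 0 := fun k => hbx k ▸ bas.ne_zero _
  have hyne : ∀ k : ℕ, y (k + 1) ≠ 0 := fun k => hby k ▸ bas.ne_zero _
  -- cancellation of complex scalars
  have hcan : ∀ (a b : ℂ) (v : B), v ≠ 0 → a • v = b • v → a = b := by
    intro a b v hv h
    by_contra hne
    apply hv
    have h2 : (a - b) • v = 0 := by rw [sub_smul, h, sub_self]
    have h3 : v = (a - b)⁻¹ • ((a - b) • v) := by
      rw [smul_smul, inv_mul_cancel₀ (sub_ne_zero.2 hne), one_smul]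
    rw [h2, smul_zero] at h3
    exact h3
  -- part 1 for x
  have part1x : ∀ k : ℕ, ∃ c : ℂ, c ≠ 0 ∧ x (k + 1) = c • x 1 ^ (k + 1) := by
    intro k
    induction k with
    | zero => exact ⟨1, one_ne_zero, by simp⟩
    | succ k ih =>
      obtain ⟨d, hd0, hd⟩ := ih
      obtain ⟨c, hc0, hc⟩ := hx 1 (k + 1) le_rfl (by omega)
      refine ⟨c⁻¹ * d, by simp [hc0, hd0], ?_⟩
      have h1 : x (1 + (k + 1)) = c⁻¹ • (x 1 * x (k + 1)) := by
        rw [hc, smul_smul, inv_mul_cancel₀ hc0, one_smul]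
      rw [show k + 1 + 1 = 1 + (k + 1) by ring, h1, hd, mul_smul_comm, ← pow_succ',
        smul_smul, show 1 + (k + 1) = k + 1 + 1 by ring]
  have part1y : ∀ k : ℕ, ∃ c : ℂ, c ≠ 0 ∧ y (k + 1) = c • y 1 ^ (k + 1) := by
    intro k
    induction k with
    | zero => exact ⟨1, one_ne_zero, by simp⟩
    | succ k ih =>
      obtain ⟨d, hd0, hd⟩ := ih
      obtain ⟨c, hc0, hc⟩ := hy 1 (k + 1) le_rfl (by omega)
      refine ⟨c⁻¹ * d, by simp [hc0, hd0], ?_⟩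
      have h1 : y (1 + (k + 1)) = c⁻¹ • (y 1 * y (k + 1)) := by
        rw [hc, smul_smul, inv_mul_cancel₀ hc0, one_smul]
      rw [show k + 1 + 1 = 1 + (k + 1) by ring, h1, hd, mul_smul_comm, ← pow_succ',
        smul_smul, show 1 + (k + 1) = k + 1 + 1 by ring]
  -- choose the scalars
  obtain ⟨cx, hcx0, hcxe⟩ : ∃ cx : ℕ → ℂ, (∀ k : ℕ, cx (k + 1) ≠ 0) ∧
      (∀ k : ℕ, x (k + 1) = cx (k + 1) • x 1 ^ (k + 1)) := by
    choose f h1 h2 using part1x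
    exact ⟨fun j => f (j - 1), fun k => h1 k, fun k => h2 k⟩
  obtain ⟨cy, hcy0, hcye⟩ : ∃ cy : ℕ → ℂ, (∀ k : ℕ, cy (k + 1) ≠ 0) ∧
      (∀ k : ℕ, y (k + 1) = cy (k + 1) • y 1 ^ (k + 1)) := by
    choose f h1 h2 using part1y
    exact ⟨fun j => f (j - 1), fun k => h1 k, fun k => h2 k⟩
  have hcx1 : cx 1 = 1 := by
    have h := hcxe 0
    norm_num at h
    exact (hcan 1 (cx 1) (x 1) (hxne 0) (by rw [one_smul]; exact h)).symm
  have hcy1 : cy 1 = 1 := by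
    have h := hcye 0
    norm_num at h
    exact (hcan 1 (cy 1) (y 1) (hyne 0) (by rw [one_smul]; exact h)).symm
  have hx1pow : ∀ j : ℕ, x 1 ^ j ≠ 0 := by
    intro j
    cases j with
    | zero => simpa using one_ne_zero
    | succ j => exact fun h => hxne j (by rw [hcxe j, h, smul_zero])
  -- the polynomial P with x1 y1 = algebraMap P
  have hxy' : x 1 * y 1 = algebraMap (MvPolynomial (Fin (ν + 1 + 1)) ℂ) B
      (X 0 ^ (ν + 1) + ∑ i : Fin (ν + 1), X i.succ * X 0 ^ (ν - (i : ℕ))) := hxy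
  set P : MvPolynomial (Fin (ν + 1 + 1)) ℂ :=
    X 0 ^ (ν + 1) + ∑ i : Fin (ν + 1), X i.succ * X 0 ^ (ν - (i : ℕ)) with hPdef
  have hPsplit : P = X 0 ^ (ν + 1) +
      (∑ i : Fin ν, X ((i.castSucc).succ) * X 0 ^ (ν - (i : ℕ))) + X (Fin.last (ν + 1)) := by
    rw [hPdef, Fin.sum_univ_castSucc]
    simp [Fin.succ_last]
    ring
  -- the target polynomial ring and the map θ
  set Xa : MvPolynomial (Fin (ν + 1 + 2)) ℂ := X ⟨ν + 1, by omega⟩ with hXa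
  set Xb : MvPolynomial (Fin (ν + 1 + 2)) ℂ := X ⟨ν + 2, by omega⟩ with hXb
  set r : MvPolynomial (Fin (ν + 1 + 2)) ℂ :=
    Xa * Xb - (X 0 ^ (ν + 1) +
      ∑ i : Fin ν, X (((i.castSucc).succ).castSucc) * X 0 ^ (ν - (i : ℕ))) with hrdef
  set v : Fin (ν + 1 + 1) → MvPolynomial (Fin (ν + 1 + 2)) ℂ :=
    fun i => if (i : ℕ) = ν + 1 then r else X i.castSucc with hvdef
  set θ : MvPolynomial (Fin (ν + 1 + 1)) ℂ →ₐ[ℂ] MvPolynomial (Fin (ν + 1 + 2)) ℂ :=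
    aeval v with hθdef
  have hvmid : ∀ j : Fin (ν + 1 + 1), (j : ℕ) ≠ ν + 1 → θ (X j) = X j.castSucc := by
    intro j hj
    rw [hθdef, aeval_X, hvdef]
    simp [hj]
  have hv0 : θ (X 0) = X (0 : Fin (ν + 1 + 2)) := by
    rw [hvmid 0 (by simp)]
    simp
  have hvlast : θ (X (Fin.last (ν + 1))) = r := by
    rw [hθdef, aeval_X, hvdef]
    simp [Fin.last]
  have hθP : θ P = Xa * Xb := by
    rw [hPsplit, map_add, map_add, map_pow, hv0, hvlast, map_sum]
    rw [Finset.sum_congr rfl (fun i (_ : i ∈ Finset.univ) => by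
      rw [map_mul, map_pow, hv0, hvmid ((i.castSucc).succ)
        (by simp; omega)])]
    rw [hrdef]
    ring
  -- algebra structure on the target via θ
  letI : Algebra (MvPolynomial (Fin (ν + 1 + 1)) ℂ) (MvPolynomial (Fin (ν + 1 + 2)) ℂ) :=
    θ.toRingHom.toAlgebra
  have halgmap : ∀ a : MvPolynomial (Fin (ν + 1 + 1)) ℂ,
      algebraMap (MvPolynomial (Fin (ν + 1 + 1)) ℂ) (MvPolynomial (Fin (ν + 1 + 2)) ℂ) a
        = θ a := fun a => rfl
  haveI : IsScalarTower ℂ (MvPolynomial (Fin (ν + 1 + 1)) ℂ)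
      (MvPolynomial (Fin (ν + 1 + 2)) ℂ) :=
    IsScalarTower.of_algebraMap_eq fun c => (θ.commutes c).symm
  haveI : SMulCommClass (MvPolynomial (Fin (ν + 1 + 1)) ℂ) ℂ
      (MvPolynomial (Fin (ν + 1 + 2)) ℂ) :=
    ⟨fun a c w => by simp only [Algebra.smul_def]; ring⟩
  -- the linear map L
  set g : (Unit ⊕ ℕ ⊕ ℕ) → MvPolynomial (Fin (ν + 1 + 2)) ℂ :=
    Sum.elim (fun _ => 1)
      (Sum.elim (fun k => cx (k + 1) • Xa ^ (k + 1)) (fun k => cy (k + 1) • Xb ^ (k + 1)))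
    with hgdef
  have hg1 : g (Sum.inl ()) = 1 := rfl
  have hgx : ∀ k : ℕ, g (Sum.inr (Sum.inl k)) = cx (k + 1) • Xa ^ (k + 1) := fun _ => rfl
  have hgy : ∀ k : ℕ, g (Sum.inr (Sum.inr k)) = cy (k + 1) • Xb ^ (k + 1) := fun _ => rfl
  set L : B →ₗ[MvPolynomial (Fin (ν + 1 + 1)) ℂ] MvPolynomial (Fin (ν + 1 + 2)) ℂ :=
    bas.constr ℂ g with hLdef
  have hLb : ∀ i, L (bas i) = g i := fun i => bas.constr_basis ℂ g i
  have hL1 : L 1 = 1 := by rw [← hb1, hLb, hg1]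
  have hLx : ∀ k : ℕ, L (x (k + 1)) = cx (k + 1) • Xa ^ (k + 1) := fun k => by
    rw [← hbx k, hLb, hgx]
  have hLy : ∀ k : ℕ, L (y (k + 1)) = cy (k + 1) • Xb ^ (k + 1) := fun k => by
    rw [← hby k, hLb, hgy]
  have hLsmulA : ∀ (a : MvPolynomial (Fin (ν + 1 + 1)) ℂ) (u : B),
      L (a • u) = θ a * L u := fun a u => by
    rw [map_smul, Algebra.smul_def, halgmap]
  have hLc : ∀ (c : ℂ) (u : B), L (c • u) = c • L u := fun c u => by
    rw [← algebraMap_smul (MvPolynomial (Fin (ν + 1 + 1)) ℂ) c u, map_smul, algebraMap_smul]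
  -- multiplicativity on basis elements: xx case
  have keyxx : ∀ k l : ℕ, L (x (k + 1) * x (l + 1)) =
      (cx (k + 1) • Xa ^ (k + 1)) * (cx (l + 1) • Xa ^ (l + 1)) := by
    intro k l
    obtain ⟨c, hc0, hce⟩ := hx (k + 1) (l + 1) (by omega) (by omega)
    rw [show k + 1 + (l + 1) = k + l + 1 + 1 by ring] at hce
    have hscal : c * cx (k + l + 1 + 1) = cx (k + 1) * cx (l + 1) := by
      apply hcan _ _ _ (hx1pow (k + l + 1 + 1))
      calc (c * cx (k + l + 1 + 1)) • x 1 ^ (k + l + 1 + 1)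
          = c • (cx (k + l + 1 + 1) • x 1 ^ (k + l + 1 + 1)) := by rw [smul_smul]
        _ = c • x (k + l + 1 + 1) := by rw [← hcxe]
        _ = x (k + 1) * x (l + 1) := hce.symm
        _ = (cx (k + 1) • x 1 ^ (k + 1)) * (cx (l + 1) • x 1 ^ (l + 1)) := by
            rw [← hcxe, ← hcxe]
        _ = (cx (k + 1) * cx (l + 1)) • x 1 ^ (k + l + 1 + 1) := by
            rw [smul_mul_smul_comm, ← pow_add, show k + 1 + (l + 1) = k + l + 1 + 1 by ring]
    rw [hce, hLc, hLx, smul_smul, hscal, smul_mul_smul_comm, ← pow_add,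
      show k + 1 + (l + 1) = k + l + 1 + 1 by ring]
  have hy1pow : ∀ j : ℕ, y 1 ^ j ≠ 0 := by
    intro j
    cases j with
    | zero => simpa using one_ne_zero
    | succ j => exact fun h => hyne j (by rw [hcye j, h, smul_zero])
  have keyyy : ∀ k l : ℕ, L (y (k + 1) * y (l + 1)) =
      (cy (k + 1) • Xb ^ (k + 1)) * (cy (l + 1) • Xb ^ (l + 1)) := by
    intro k l
    obtain ⟨c, hc0, hce⟩ := hy (k + 1) (l + 1) (by omega) (by omega)
    rw [show k + 1 + (l + 1) = k + l + 1 + 1 by ring] at hce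
    have hscal : c * cy (k + l + 1 + 1) = cy (k + 1) * cy (l + 1) := by
      apply hcan _ _ _ (hy1pow (k + l + 1 + 1))
      calc (c * cy (k + l + 1 + 1)) • y 1 ^ (k + l + 1 + 1)
          = c • (cy (k + l + 1 + 1) • y 1 ^ (k + l + 1 + 1)) := by rw [smul_smul]
        _ = c • y (k + l + 1 + 1) := by rw [← hcye]
        _ = y (k + 1) * y (l + 1) := hce.symm
        _ = (cy (k + 1) • y 1 ^ (k + 1)) * (cy (l + 1) • y 1 ^ (l + 1)) := by
            rw [← hcye, ← hcye]
        _ = (cy (k + 1) * cy (l + 1)) • y 1 ^ (k + l + 1 + 1) := by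
            rw [smul_mul_smul_comm, ← pow_add, show k + 1 + (l + 1) = k + l + 1 + 1 by ring]
    rw [hce, hLc, hLy, smul_smul, hscal, smul_mul_smul_comm, ← pow_add,
      show k + 1 + (l + 1) = k + l + 1 + 1 by ring]
  -- products of powers of x1 and y1
  have hpowxy : ∀ K j : ℕ, x 1 ^ K * y 1 ^ (K + j) =
      (algebraMap (MvPolynomial (Fin (ν + 1 + 1)) ℂ) B P) ^ K * y 1 ^ j := by
    intro K
    induction K with
    | zero => intro j; simp
    | succ K ih =>
      intro j
      have h1 : x 1 ^ (K + 1) * y 1 ^ (K + 1 + j) =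
          (x 1 * y 1) * (x 1 ^ K * y 1 ^ (K + j)) := by ring
      rw [h1, ih j, hxy']
      ring
  have hpowyx : ∀ K j : ℕ, x 1 ^ (K + j) * y 1 ^ K =
      (algebraMap (MvPolynomial (Fin (ν + 1 + 1)) ℂ) B P) ^ K * x 1 ^ j := by
    intro K
    induction K with
    | zero => intro j; simp
    | succ K ih =>
      intro j
      have h1 : x 1 ^ (K + 1 + j) * y 1 ^ (K + 1) =
          (x 1 * y 1) * (x 1 ^ (K + j) * y 1 ^ K) := by ring
      rw [h1, ih j, hxy']
      ring
  have hLP : ∀ (K : ℕ) (z : B),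
      L ((algebraMap (MvPolynomial (Fin (ν + 1 + 1)) ℂ) B P) ^ K * z) =
        (Xa * Xb) ^ K * L z := by
    intro K z
    rw [← map_pow, ← Algebra.smul_def, hLsmulA, map_pow, hθP]
  -- xy case
  have keyxy : ∀ k l : ℕ, L (x (k + 1) * y (l + 1)) =
      (cx (k + 1) • Xa ^ (k + 1)) * (cy (l + 1) • Xb ^ (l + 1)) := by
    intro k l
    rw [hcxe k, hcye l, smul_mul_smul_comm, hLc]
    rcases le_total (k + 1) (l + 1) with h | h
    · obtain ⟨j, hj⟩ : ∃ j, l + 1 = (k + 1) + j := ⟨l - k, by omega⟩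
      rw [hj, hpowxy (k + 1) j, hLP]
      cases j with
      | zero =>
        rw [pow_zero, hL1, smul_mul_smul_comm]
        congr 1 <;> ring
      | succ j =>
        have hLyp : L (y 1 ^ (j + 1)) = Xb ^ (j + 1) := by
          have hy1p : y 1 ^ (j + 1) = (cy (j + 1))⁻¹ • y (j + 1) := by
            rw [hcye j, smul_smul, inv_mul_cancel₀ (hcy0 j), one_smul]
          rw [hy1p, hLc, hLy, smul_smul, inv_mul_cancel₀ (hcy0 j), one_smul]
        rw [hLyp, smul_mul_smul_comm]
        congr 1 <;> ring
    · obtain ⟨j, hj⟩ : ∃ j, k + 1 = (l + 1) + j := ⟨k - l, by omega⟩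
      rw [hj, hpowyx (l + 1) j, hLP]
      cases j with
      | zero =>
        rw [pow_zero, hL1, smul_mul_smul_comm]
        congr 1 <;> ring
      | succ j =>
        have hLxp : L (x 1 ^ (j + 1)) = Xa ^ (j + 1) := by
          have hx1p : x 1 ^ (j + 1) = (cx (j + 1))⁻¹ • x (j + 1) := by
            rw [hcxe j, smul_smul, inv_mul_cancel₀ (hcx0 j), one_smul]
          rw [hx1p, hLc, hLx, smul_smul, inv_mul_cancel₀ (hcx0 j), one_smul]
        rw [hLxp, smul_mul_smul_comm]
        congr 1 <;> ring
  -- multiplicativity on all basis elements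
  have key : ∀ i j, L (bas i * bas j) = g i * g j := by
    intro i j
    rcases i with ⟨⟩ | k | k <;> rcases j with ⟨⟩ | l | l
    · rw [hb1, one_mul, hL1, hg1, one_mul]
    · rw [hb1, hbx, one_mul, hLx, hg1, hgx, one_mul]
    · rw [hb1, hby, one_mul, hLy, hg1, hgy, one_mul]
    · rw [hb1, hbx, mul_one, hLx, hg1, hgx, mul_one]
    · rw [hbx, hbx, hgx, hgx]; exact keyxx k l
    · rw [hbx, hby, hgx, hgy]; exact keyxy k l
    · rw [hb1, hby, mul_one, hLy, hg1, hgy, mul_one]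
    · rw [hby, hbx, hgy, hgx, mul_comm (y (k + 1)) (x (l + 1)), keyxy l k]
      exact mul_comm _ _
    · rw [hby, hby, hgy, hgy]; exact keyyy k l
  -- bilinear extension of multiplicativity
  have hmul : ∀ u w : B, L (u * w) = L u * L w := by
    have step1 : ∀ (j) (u : B), L (u * bas j) = L u * g j := by
      intro j
      have heq : L.comp (LinearMap.mulRight (MvPolynomial (Fin (ν + 1 + 1)) ℂ) (bas j)) =
          (LinearMap.mulRight (MvPolynomial (Fin (ν + 1 + 1)) ℂ) (g j)).comp L := by
        apply bas.ext
        intro i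
        simp only [LinearMap.comp_apply, LinearMap.mulRight_apply]
        rw [key i j, hLb]
      intro u
      simpa using LinearMap.congr_fun heq u
    intro u w
    have heq2 : L.comp (LinearMap.mulLeft (MvPolynomial (Fin (ν + 1 + 1)) ℂ) u) =
        (LinearMap.mulLeft (MvPolynomial (Fin (ν + 1 + 1)) ℂ) (L u)).comp L := by
      apply bas.ext
      intro j
      simp only [LinearMap.comp_apply, LinearMap.mulLeft_apply]
      rw [step1 j u, hLb]
    simpa using LinearMap.congr_fun heq2 w
  -- assemble the algebra hom F
  have hcommute : ∀ c : ℂ, L (algebraMap ℂ B c) =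
      algebraMap ℂ (MvPolynomial (Fin (ν + 1 + 2)) ℂ) c := by
    intro c
    rw [Algebra.algebraMap_eq_smul_one, hLc, hL1, Algebra.algebraMap_eq_smul_one]
  set F : B →ₐ[ℂ] MvPolynomial (Fin (ν + 1 + 2)) ℂ :=
    { toFun := L, map_one' := hL1, map_mul' := hmul, map_zero' := L.map_zero,
      map_add' := L.map_add, commutes' := hcommute } with hFdef
  have hFapp : ∀ u : B, F u = L u := fun u => rfl
  have hFalg : ∀ a : MvPolynomial (Fin (ν + 1 + 1)) ℂ,
      F (algebraMap (MvPolynomial (Fin (ν + 1 + 1)) ℂ) B a) = θ a := by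
    intro a
    rw [hFapp, ← mul_one (algebraMap (MvPolynomial (Fin (ν + 1 + 1)) ℂ) B a),
      ← Algebra.smul_def, hLsmulA, hL1, mul_one]
  -- the inverse algebra hom φ
  set wf : Fin (ν + 1 + 2) → B := fun j =>
    if h : (j : ℕ) < ν + 1 then
      algebraMap (MvPolynomial (Fin (ν + 1 + 1)) ℂ) B (X ⟨(j : ℕ), by omega⟩)
    else if (j : ℕ) = ν + 1 then x 1 else y 1 with hwf
  set φ : MvPolynomial (Fin (ν + 1 + 2)) ℂ →ₐ[ℂ] B := aeval wf with hφdef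
  have hφXa : φ Xa = x 1 := by
    rw [hφdef, hXa, aeval_X, hwf]
    simp
  have hφXb : φ Xb = y 1 := by
    rw [hφdef, hXb, aeval_X, hwf]
    norm_num
  have hφ0 : φ (X (0 : Fin (ν + 1 + 2))) =
      algebraMap (MvPolynomial (Fin (ν + 1 + 1)) ℂ) B (X 0) := by
    rw [hφdef, aeval_X, hwf]
    beta_reduce
    rw [dif_pos (by norm_num)]
    congr 1
  have hφmid : ∀ i : Fin ν, φ (X (((i.castSucc).succ).castSucc)) =
      algebraMap (MvPolynomial (Fin (ν + 1 + 1)) ℂ) B (X ((i.castSucc).succ)) := by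
    intro i
    have hi := i.isLt
    rw [hφdef, aeval_X, hwf]
    beta_reduce
    rw [dif_pos (by simp)]
    congr 1
  have hφθ : ∀ a : MvPolynomial (Fin (ν + 1 + 1)) ℂ,
      φ (θ a) = algebraMap (MvPolynomial (Fin (ν + 1 + 1)) ℂ) B a := by
    have hcomp : φ.comp θ = IsScalarTower.toAlgHom ℂ (MvPolynomial (Fin (ν + 1 + 1)) ℂ) B := by
      apply algHom_ext
      intro i
      rw [AlgHom.comp_apply]
      have hrhs : (IsScalarTower.toAlgHom ℂ (MvPolynomial (Fin (ν + 1 + 1)) ℂ) B) (X i) =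
          algebraMap (MvPolynomial (Fin (ν + 1 + 1)) ℂ) B (X i) := by
        simp [IsScalarTower.coe_toAlgHom']
      rw [hrhs]
      by_cases hi : (i : ℕ) = ν + 1
      · have hi' : i = Fin.last (ν + 1) := Fin.ext (by simpa using hi)
        subst hi'
        rw [hvlast, hrdef, map_sub, map_mul, hφXa, hφXb, map_add, map_pow, hφ0, map_sum]
        rw [Finset.sum_congr rfl (fun i (_ : i ∈ Finset.univ) => by
          rw [map_mul, map_pow, hφmid, hφ0])]
        have hmapP : algebraMap (MvPolynomial (Fin (ν + 1 + 1)) ℂ) B P =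
            algebraMap (MvPolynomial (Fin (ν + 1 + 1)) ℂ) B (X 0) ^ (ν + 1) +
            (∑ i : Fin ν, algebraMap (MvPolynomial (Fin (ν + 1 + 1)) ℂ) B (X ((i.castSucc).succ)) *
              algebraMap (MvPolynomial (Fin (ν + 1 + 1)) ℂ) B (X 0) ^ (ν - (i : ℕ))) +
            algebraMap (MvPolynomial (Fin (ν + 1 + 1)) ℂ) B (X (Fin.last (ν + 1))) := by
          rw [hPsplit]
          simp only [map_add, map_sum, map_mul, map_pow]
        rw [hxy', hmapP]
        ring
      · rw [hvmid i hi, hφdef, aeval_X, hwf]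
        beta_reduce
        rw [dif_pos (by have := i.isLt; simp; omega)]
        congr 1
    intro a
    exact AlgHom.congr_fun hcomp a
  -- φ ∘ F = id
  have hφF : ∀ b : B, φ (F b) = b := by
    set φA : MvPolynomial (Fin (ν + 1 + 2)) ℂ →ₗ[MvPolynomial (Fin (ν + 1 + 1)) ℂ] B :=
      { toFun := φ, map_add' := map_add φ, map_smul' := fun a z => by
          simp only [RingHom.id_apply]
          rw [Algebra.smul_def a z, map_mul, halgmap, hφθ, ← Algebra.smul_def] } with hφA
    have hφsmulc : ∀ (c : ℂ) (z : MvPolynomial (Fin (ν + 1 + 2)) ℂ), φ (c • z) = c • φ z := by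
      intro c z
      rw [Algebra.smul_def, map_mul, AlgHom.commutes, ← Algebra.smul_def]
    have heq : φA.comp L = LinearMap.id := by
      apply bas.ext
      intro i
      simp only [LinearMap.comp_apply, LinearMap.id_apply]
      rcases i with ⟨⟩ | k | k
      · rw [hLb, hg1, hb1]
        exact map_one φ
      · rw [hLb, hgx, hbx]
        show φ (cx (k + 1) • Xa ^ (k + 1)) = x (k + 1)
        rw [hφsmulc, map_pow, hφXa, ← hcxe k]
      · rw [hLb, hgy, hby]
        show φ (cy (k + 1) • Xb ^ (k + 1)) = y (k + 1)
        rw [hφsmulc, map_pow, hφXb, ← hcye k]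
    intro b
    exact LinearMap.congr_fun heq b
  -- F ∘ φ = id
  have hFφ : F.comp φ = AlgHom.id ℂ (MvPolynomial (Fin (ν + 1 + 2)) ℂ) := by
    apply algHom_ext
    intro j
    rw [AlgHom.comp_apply, AlgHom.id_apply, hφdef, aeval_X, hwf]
    beta_reduce
    by_cases h1 : (j : ℕ) < ν + 1
    · rw [dif_pos h1, hFalg, hvmid _ (by simp; omega)]
      congr 1
    · rw [dif_neg h1]
      by_cases h2 : (j : ℕ) = ν + 1
      · rw [if_pos h2]
        have hF1 : F (x 1) = cx 1 • Xa ^ 1 := hLx 0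
        rw [hF1, hcx1, one_smul, pow_one, hXa]
        exact congrArg X (Fin.ext (by simp [h2]))
      · rw [if_neg h2]
        have hF1 : F (y 1) = cy 1 • Xb ^ 1 := hLy 0
        rw [hF1, hcy1, one_smul, pow_one, hXb]
        have hj2 : (j : ℕ) = ν + 2 := by have := j.isLt; omega
        exact congrArg X (Fin.ext (by simp [hj2]))
  -- the algebra isomorphism
  set ψ : B ≃ₐ[ℂ] MvPolynomial (Fin (ν + 1 + 2)) ℂ :=
    AlgEquiv.ofAlgHom F φ hFφ (AlgHom.ext hφF) with hψdef
  have hψapp : ∀ b : B, ψ b = F b := fun b => rfl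
  refine ⟨?_, ?_, ψ, ?_, ?_, ?_, ?_⟩
  · intro k hk
    obtain ⟨k, rfl⟩ : ∃ j, k = j + 1 := ⟨k - 1, by omega⟩
    exact part1x k
  · intro k hk
    obtain ⟨k, rfl⟩ : ∃ j, k = j + 1 := ⟨k - 1, by omega⟩
    exact part1y k
  · rw [hψapp, hFalg, hv0]
  · intro i hilt
    rw [hψapp, hFalg, hvmid i.succ (by simp; omega)]
  · rw [hψapp]
    have hF1 : F (x 1) = cx 1 • Xa ^ 1 := hLx 0
    rw [hF1, hcx1, one_smul, pow_one, hXa]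
  · rw [hψapp]
    have hF1 : F (y 1) = cy 1 • Xb ^ 1 := hLy 0
    rw [hF1, hcy1, one_smul, pow_one, hXb]
end

section
/- Let K be an algebraically closed field and let f be monic of degree n with distinct roots λ_1, …, λ_n, and r of degree < n such that r(λ_{i_0}) = 0 for exactly one index i_0 and r(λ_i) ≠ 0 for i ≠ i_0. Then the set of triples (x, v, v*) ∈ Mat_n(K) × K^n × (K^n)* with char-poly(x) = f and v* adj(λI − x) v = r(λ) is nonempty, and, with respect to the GL_n(K)-action (g,(x,v,v*)) ↦ (gxg^{-1}, gv, v*g^{-1}), this set is GL_n(K)-equivariantly isomorphic to (GL_n(K) × Z)/G_m, where Z = {(X,Y) : XY = 0} ⊂ K² and G_m acts on GL_n × Z by s·(g, X, Y) = (g·d(s), s^{-1}X, sY) for a suitable one-parameter subgroup d(s) of diagonal matrices. -/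
open Matrix Polynomial

/-- The condition on a triple `(x, v, v*)`: char-poly of `x` is `f`, and
`v* adj(λI − x) v = r(λ)` as polynomials. -/
def cond19 {K : Type*} [Field K] {n : ℕ} (f r : Polynomial K)
    (p : Matrix (Fin n) (Fin n) K × (Fin n → K) × (Fin n → K)) : Prop :=
  p.1.charpoly = f ∧
    (fun i => Polynomial.C (p.2.2 i)) ⬝ᵥ
      (((Polynomial.X : Polynomial K) • (1 : Matrix (Fin n) (Fin n) (Polynomial K)) -
        p.1.map Polynomial.C).adjugate.mulVec fun i => Polynomial.C (p.2.1 i)) = r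

/-- The conjugation action of `GL_n(K)` on triples `(x, v, v*)`. -/
noncomputable def act19 {K : Type*} [Field K] {n : ℕ} (g : GL (Fin n) K)
    (p : Matrix (Fin n) (Fin n) K × (Fin n → K) × (Fin n → K)) :
    Matrix (Fin n) (Fin n) K × (Fin n → K) × (Fin n → K) :=
  ((g : Matrix (Fin n) (Fin n) K) * p.1 * ((g⁻¹ : GL (Fin n) K) : Matrix (Fin n) (Fin n) K),
    (g : Matrix (Fin n) (Fin n) K).mulVec p.2.1,
    Matrix.vecMul p.2.2 ((g⁻¹ : GL (Fin n) K) : Matrix (Fin n) (Fin n) K))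

namespace S19
variable {K : Type*} [Field K] {n : ℕ}

/-- the polynomial matrix `X•1 - x.map C` used in cond19 -/
noncomputable def pm (x : Matrix (Fin n) (Fin n) K) : Matrix (Fin n) (Fin n) (Polynomial K) :=
  (X : Polynomial K) • (1 : Matrix (Fin n) (Fin n) (Polynomial K)) - x.map C

lemma pm_conj (g : GL (Fin n) K) (x : Matrix (Fin n) (Fin n) K) :
    pm ((g : Matrix (Fin n) (Fin n) K) * x * ((g⁻¹ : GL (Fin n) K) : Matrix (Fin n) (Fin n) K))
      = ((g : Matrix (Fin n) (Fin n) K).map C) * pm x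
        * (((g⁻¹ : GL (Fin n) K) : Matrix (Fin n) (Fin n) K).map C) := by
  have h1 : (g : Matrix (Fin n) (Fin n) K) * ((g⁻¹ : GL (Fin n) K) : Matrix (Fin n) (Fin n) K) = 1 :=
    g.mul_inv
  have hmap : ∀ A B : Matrix (Fin n) (Fin n) K, (A * B).map C = A.map C * B.map C := by
    intro A B
    simpa using (C : K →+* Polynomial K).mapMatrix.map_mul A B
  have h1' : (g : Matrix (Fin n) (Fin n) K).map C
      * (((g⁻¹ : GL (Fin n) K) : Matrix (Fin n) (Fin n) K).map C) = 1 := by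
    rw [← hmap, h1]; simp
  simp only [pm, mul_sub, sub_mul, hmap]
  congr 1
  rw [Matrix.mul_smul, Matrix.smul_mul, mul_one, h1']

lemma map_C_mulVec (A : Matrix (Fin n) (Fin n) K) (v : Fin n → K) :
    (fun i => C (A.mulVec v i)) = (A.map C).mulVec (fun i => C (v i)) := by
  funext i
  simp [Matrix.mulVec, dotProduct, map_sum]

lemma map_C_vecMul (A : Matrix (Fin n) (Fin n) K) (v : Fin n → K) :
    (fun i => C (Matrix.vecMul v A i)) = Matrix.vecMul (fun i => C (v i)) (A.map C) := by
  funext i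
  simp [Matrix.vecMul, dotProduct, map_sum]

lemma bilin_conj (g : GL (Fin n) K) (x : Matrix (Fin n) (Fin n) K) (v w : Fin n → K) :
    (fun i => C (Matrix.vecMul w ((g⁻¹ : GL (Fin n) K) : Matrix (Fin n) (Fin n) K) i)) ⬝ᵥ
      ((pm ((g : Matrix (Fin n) (Fin n) K) * x
        * ((g⁻¹ : GL (Fin n) K) : Matrix (Fin n) (Fin n) K))).adjugate.mulVec
        (fun i => C ((g : Matrix (Fin n) (Fin n) K).mulVec v i)))
    = (fun i => C (w i)) ⬝ᵥ ((pm x).adjugate.mulVec (fun i => C (v i))) := by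
  set G : Matrix (Fin n) (Fin n) (Polynomial K) := (g : Matrix (Fin n) (Fin n) K).map C with hG
  set G' : Matrix (Fin n) (Fin n) (Polynomial K) :=
    ((g⁻¹ : GL (Fin n) K) : Matrix (Fin n) (Fin n) K).map C with hG'
  have hmap : ∀ A B : Matrix (Fin n) (Fin n) K, (A * B).map C = A.map C * B.map C := by
    intro A B
    simpa using (C : K →+* Polynomial K).mapMatrix.map_mul A B
  have h1 : G' * G = 1 := by
    rw [hG, hG', ← hmap, g.inv_mul]; simp
  rw [map_C_mulVec, map_C_vecMul, pm_conj]
  rw [adjugate_mul_distrib, adjugate_mul_distrib]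
  rw [Matrix.dotProduct_mulVec, Matrix.vecMul_vecMul, Matrix.dotProduct_mulVec,
    Matrix.vecMul_vecMul]
  have key : G' * (adjugate G' * (adjugate (pm x) * adjugate G)) * G = adjugate (pm x) := by
    rw [show G' * (adjugate G' * (adjugate (pm x) * adjugate G)) * G
        = (G' * adjugate G') * adjugate (pm x) * (adjugate G * G) by
          simp only [Matrix.mul_assoc],
      Matrix.mul_adjugate, Matrix.adjugate_mul]
    rw [Matrix.smul_mul, Matrix.one_mul, Matrix.mul_smul, mul_one, smul_smul, mul_comm,
      ← det_mul, h1, det_one, one_smul]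
  rw [key, ← Matrix.dotProduct_mulVec]

lemma charpoly_conj (g : GL (Fin n) K) (x : Matrix (Fin n) (Fin n) K) :
    ((g : Matrix (Fin n) (Fin n) K) * x
      * ((g⁻¹ : GL (Fin n) K) : Matrix (Fin n) (Fin n) K)).charpoly = x.charpoly := by
  have hmap : ∀ A B : Matrix (Fin n) (Fin n) K, (A * B).map C = A.map C * B.map C := fun A B => by
    simpa using (C : K →+* Polynomial K).mapMatrix.map_mul A B
  have h1 : (g : Matrix (Fin n) (Fin n) K).map C
      * (((g⁻¹ : GL (Fin n) K) : Matrix (Fin n) (Fin n) K).map C) = 1 := by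
    rw [← hmap, g.mul_inv]; simp
  have h2 : charmatrix ((g : Matrix (Fin n) (Fin n) K) * x
      * ((g⁻¹ : GL (Fin n) K) : Matrix (Fin n) (Fin n) K))
      = ((g : Matrix (Fin n) (Fin n) K).map C) * charmatrix x
        * (((g⁻¹ : GL (Fin n) K) : Matrix (Fin n) (Fin n) K).map C) := by
    have h3 : ∀ y : Matrix (Fin n) (Fin n) K,
        charmatrix y = (X : Polynomial K) • (1 : Matrix (Fin n) (Fin n) (Polynomial K)) - y.map C := by
      intro y; ext i j
      by_cases h : i = j <;>
        simp [charmatrix_apply, Matrix.smul_apply, Matrix.one_apply, Matrix.diagonal_apply, h]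
    simp only [h3, mul_sub, sub_mul, hmap]
    congr 1
    rw [Matrix.mul_smul, Matrix.smul_mul, mul_one, h1]
  have h1' : (((g⁻¹ : GL (Fin n) K) : Matrix (Fin n) (Fin n) K).map C)
      * ((g : Matrix (Fin n) (Fin n) K).map C) = 1 := by
    rw [← hmap, g.inv_mul]; simp
  rw [Matrix.charpoly, h2, det_mul, det_mul, mul_comm, ← mul_assoc, ← det_mul, h1', det_one,
    one_mul]
  rfl

lemma charpoly_diag (lam : Fin n → K) :
    (diagonal lam).charpoly = ∏ i, (X - C (lam i)) := by
  rw [Matrix.charpoly_of_upperTriangular _ (Matrix.blockTriangular_diagonal lam)]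
  simp

lemma diag_bilin (lam : Fin n → K) (u w : Fin n → K) :
    (fun i => C (w i)) ⬝ᵥ
      ((((X : Polynomial K) • (1 : Matrix (Fin n) (Fin n) (Polynomial K))
        - (diagonal lam).map C).adjugate).mulVec (fun i => C (u i)))
    = ∑ i, C (w i * u i) * ∏ j ∈ Finset.univ.erase i, ((X : Polynomial K) - C (lam j)) := by
  have hd : (X : Polynomial K) • (1 : Matrix (Fin n) (Fin n) (Polynomial K))
      - (diagonal lam).map C = diagonal (fun i => (X : Polynomial K) - C (lam i)) := by
    ext i j
    by_cases h : i = j <;>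
      simp [Matrix.smul_apply, Matrix.one_apply, Matrix.diagonal_apply, h]
  rw [hd, adjugate_diagonal]
  simp only [dotProduct, Matrix.mulVec_diagonal]
  refine Finset.sum_congr rfl fun i _ => ?_
  rw [_root_.map_mul]; ring

lemma lagrange_sum (lam : Fin n → K) (hlam : Function.Injective lam) (hn : 0 < n)
    (r : Polynomial K) (hrdeg : r.degree < n) (c : Fin n → K)
    (hc : ∀ i, c i * ∏ j ∈ Finset.univ.erase i, (lam i - lam j) = r.eval (lam i)) :
    ∑ i, C (c i) * ∏ j ∈ Finset.univ.erase i, ((X : Polynomial K) - C (lam j)) = r := by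
  apply Polynomial.eq_of_degrees_lt_of_eval_index_eq (s := Finset.univ) (v := lam)
    (fun a _ b _ h => hlam h)
  · apply lt_of_le_of_lt (Polynomial.degree_sum_le _ _)
    rw [Finset.card_univ, Fintype.card_fin]
    apply Finset.sup_lt_iff (show (⊥ : WithBot ℕ) < (n : ℕ) by
      rw [Nat.cast_withBot]; exact WithBot.bot_lt_coe n) |>.2
    intro i _
    apply lt_of_le_of_lt (Polynomial.degree_mul_le _ _)
    have h1 : (∏ j ∈ Finset.univ.erase i, ((X : Polynomial K) - C (lam j))).degree
        = (n - 1 : ℕ) := by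
      rw [Polynomial.degree_prod]
      simp [Polynomial.degree_X_sub_C, Finset.card_erase_of_mem]
    rw [h1]
    have h2 : (C (c i)).degree ≤ 0 := Polynomial.degree_C_le
    calc (C (c i)).degree + ((n - 1 : ℕ) : WithBot ℕ) ≤ 0 + ((n - 1 : ℕ) : WithBot ℕ) := by
          exact add_le_add_left h2 _
      _ = ((n - 1 : ℕ) : WithBot ℕ) := by rw [zero_add]
      _ < (n : WithBot ℕ) := by exact_mod_cast Nat.sub_lt hn one_pos
  · rwa [Finset.card_univ, Fintype.card_fin]
  · intro k _
    rw [Polynomial.eval_finset_sum]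
    rw [Finset.sum_eq_single k]
    · simp only [Polynomial.eval_mul, Polynomial.eval_C, Polynomial.eval_prod,
        Polynomial.eval_sub, Polynomial.eval_X]
      exact hc k
    · intro i _ hik
      have hk : k ∈ Finset.univ.erase i := Finset.mem_erase.2 ⟨fun h => hik h.symm, Finset.mem_univ _⟩
      simp only [Polynomial.eval_mul, Polynomial.eval_prod, Polynomial.eval_sub, Polynomial.eval_X,
        Polynomial.eval_C]
      rw [Finset.prod_eq_zero hk (by ring), mul_zero]
    · intro h; exact absurd (Finset.mem_univ k) h

lemma sum_eval (lam : Fin n → K) (a : Fin n → K) (r : Polynomial K)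
    (h : ∑ i, C (a i) * ∏ j ∈ Finset.univ.erase i, ((X : Polynomial K) - C (lam j)) = r)
    (k : Fin n) :
    a k * ∏ j ∈ Finset.univ.erase k, (lam k - lam j) = r.eval (lam k) := by
  rw [← h, Polynomial.eval_finset_sum, Finset.sum_eq_single k]
  · simp [Polynomial.eval_prod]
  · intro i _ hik
    have hk : k ∈ Finset.univ.erase i := Finset.mem_erase.2 ⟨fun h => hik h.symm, Finset.mem_univ _⟩
    simp only [Polynomial.eval_mul, Polynomial.eval_prod, Polynomial.eval_sub, Polynomial.eval_X,
      Polynomial.eval_C]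
    rw [Finset.prod_eq_zero hk (by ring), mul_zero]
  · intro h; exact absurd (Finset.mem_univ k) h

lemma act19_one (p : Matrix (Fin n) (Fin n) K × (Fin n → K) × (Fin n → K)) :
    act19 1 p = p := by
  simp [act19]

lemma act19_mul (g h : GL (Fin n) K) (p : Matrix (Fin n) (Fin n) K × (Fin n → K) × (Fin n → K)) :
    act19 g (act19 h p) = act19 (g * h) p := by
  simp only [act19, _root_.mul_inv_rev, Units.val_mul, Matrix.mulVec_mulVec, Matrix.vecMul_vecMul]
  refine Prod.ext ?_ (Prod.ext rfl rfl)
  simp [Matrix.mul_assoc]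

lemma cond19_act {f r : Polynomial K} (g : GL (Fin n) K)
    (p : Matrix (Fin n) (Fin n) K × (Fin n → K) × (Fin n → K)) (hp : cond19 f r p) :
    cond19 f r (act19 g p) := by
  obtain ⟨h1, h2⟩ := hp
  refine ⟨?_, ?_⟩
  · rw [show (act19 g p).1 = (g : Matrix (Fin n) (Fin n) K) * p.1
      * ((g⁻¹ : GL (Fin n) K) : Matrix (Fin n) (Fin n) K) from rfl, charpoly_conj, h1]
  · exact (bilin_conj g p.1 p.2.1 p.2.2).trans h2

/-- the one-parameter diagonal subgroup -/
noncomputable def dmap (i0 : Fin n) : Kˣ →* GL (Fin n) K where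
  toFun s := ⟨diagonal (fun i => if i = i0 then (s : K) else 1),
    diagonal (fun i => if i = i0 then ((s⁻¹ : Kˣ) : K) else 1),
    by rw [diagonal_mul_diagonal]; convert diagonal_one using 2
       funext i; split <;> simp,
    by rw [diagonal_mul_diagonal]; convert diagonal_one using 2
       funext i; split <;> simp⟩
  map_one' := by
    ext i j
    by_cases h : i = j <;> simp [Matrix.diagonal_apply, Matrix.one_apply, h] <;> split <;> simp
  map_mul' s t := by
    ext i j
    simp only [Units.val_mul, diagonal_mul_diagonal]
    congr 1
    funext i; split <;> simp

lemma dmap_val (i0 : Fin n) (s : Kˣ) :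
    ((dmap i0 s : GL (Fin n) K) : Matrix (Fin n) (Fin n) K)
      = diagonal (fun i => if i = i0 then (s : K) else 1) := rfl

lemma dmap_inv_val (i0 : Fin n) (s : Kˣ) :
    (((dmap i0 s)⁻¹ : GL (Fin n) K) : Matrix (Fin n) (Fin n) K)
      = diagonal (fun i => if i = i0 then ((s⁻¹ : Kˣ) : K) else 1) := rfl

/-- invertible diagonal matrix as an element of `GL` -/
noncomputable def diagUnit (t : Fin n → K) (ht : ∀ i, t i ≠ 0) : GL (Fin n) K :=
  ⟨diagonal t, diagonal (fun i => (t i)⁻¹),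
    by rw [diagonal_mul_diagonal]; convert diagonal_one using 2
       funext i; exact mul_inv_cancel₀ (ht i),
    by rw [diagonal_mul_diagonal]; convert diagonal_one using 2
       funext i; exact inv_mul_cancel₀ (ht i)⟩

lemma diagUnit_val (t : Fin n → K) (ht : ∀ i, t i ≠ 0) :
    ((diagUnit t ht : GL (Fin n) K) : Matrix (Fin n) (Fin n) K) = diagonal t := rfl

lemma diagUnit_inv_val (t : Fin n → K) (ht : ∀ i, t i ≠ 0) :
    (((diagUnit t ht)⁻¹ : GL (Fin n) K) : Matrix (Fin n) (Fin n) K)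
      = diagonal (fun i => (t i)⁻¹) := rfl

lemma charpoly_eval (x : Matrix (Fin n) (Fin n) K) (μ : K) :
    x.charpoly.eval μ = (μ • (1 : Matrix (Fin n) (Fin n) K) - x).det := by
  rw [Matrix.charpoly, ← coe_evalRingHom, RingHom.map_det]
  congr 1
  ext i j
  by_cases h : i = j <;>
    simp [charmatrix_apply, Matrix.diagonal_apply, Matrix.smul_apply, Matrix.one_apply, h]

lemma exists_conj_diagonal (lam : Fin n → K) (hlam : Function.Injective lam)
    (x : Matrix (Fin n) (Fin n) K) (hx : x.charpoly = ∏ i, (X - C (lam i))) :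
    ∃ G : GL (Fin n) K, x = (G : Matrix (Fin n) (Fin n) K) * diagonal lam
      * ((G⁻¹ : GL (Fin n) K) : Matrix (Fin n) (Fin n) K) := by
  have he : ∀ i : Fin n, ∃ v : Fin n → K, v ≠ 0 ∧ x.mulVec v = lam i • v := by
    intro i
    have hdet : (lam i • (1 : Matrix (Fin n) (Fin n) K) - x).det = 0 := by
      rw [← charpoly_eval, hx]
      rw [Polynomial.eval_prod]
      exact Finset.prod_eq_zero (Finset.mem_univ i) (by simp)
    obtain ⟨v, hv0, hv⟩ := (Matrix.exists_mulVec_eq_zero_iff).2 hdet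
    refine ⟨v, hv0, ?_⟩
    rw [Matrix.sub_mulVec, Matrix.smul_mulVec, Matrix.one_mulVec, sub_eq_zero] at hv
    exact hv.symm
  choose e he0 hee using he
  have heig : ∀ i, Module.End.HasEigenvector (Matrix.mulVecLin x) (lam i) (e i) := by
    intro i
    exact ⟨Module.End.mem_eigenspace_iff.2 (by simpa using hee i), he0 i⟩
  have hli : LinearIndependent K e :=
    Module.End.eigenvectors_linearIndependent' (Matrix.mulVecLin x) lam hlam e heig
  have hgu : IsUnit (Matrix.of (fun i j => e j i) : Matrix (Fin n) (Fin n) K) := by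
    rw [← Matrix.linearIndependent_cols_iff_isUnit]
    exact hli
  obtain ⟨u, hG⟩ := hgu
  refine ⟨u, ?_⟩
  have hxg : x * Matrix.of (fun i j => e j i) = Matrix.of (fun i j => e j i) * diagonal lam := by
    ext i j
    rw [Matrix.mul_apply, Matrix.mul_diagonal]
    have h2 : ∑ k, x i k * Matrix.of (fun i j => e j i) k j = x.mulVec (e j) i := by
      simp [Matrix.mulVec, dotProduct]
    rw [h2, hee j]
    simp [mul_comm]
  have hinv : Matrix.of (fun i j => e j i)
      * ((u⁻¹ : GL (Fin n) K) : Matrix (Fin n) (Fin n) K) = 1 := by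
    rw [← hG]
    exact u.mul_inv
  calc x = x * (Matrix.of (fun i j => e j i)
          * ((u⁻¹ : GL (Fin n) K) : Matrix (Fin n) (Fin n) K)) := by
        rw [hinv, mul_one]
    _ = (x * Matrix.of (fun i j => e j i))
          * ((u⁻¹ : GL (Fin n) K) : Matrix (Fin n) (Fin n) K) := by
        rw [Matrix.mul_assoc]
    _ = _ := by rw [hxg, hG]

lemma eq_diag_of_comm (lam : Fin n → K) (hlam : Function.Injective lam)
    (m : Matrix (Fin n) (Fin n) K) (h : m * diagonal lam = diagonal lam * m) :
    m = diagonal (fun i => m i i) := by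
  ext i j
  by_cases hij : i = j
  · subst hij; simp
  · have h1 := congrFun (congrFun h i) j
    rw [Matrix.mul_diagonal, Matrix.diagonal_mul] at h1
    have hne : lam j - lam i ≠ 0 := sub_ne_zero.2 fun hc => hij (hlam hc).symm
    have h2 : m i j * (lam j - lam i) = 0 := by ring_nf; linear_combination h1
    rw [Matrix.diagonal_apply_ne _ hij]
    exact (mul_eq_zero.1 h2).resolve_right hne

/-- the base point associated to `z ∈ {XY = 0}` -/
noncomputable def base19 (lam : Fin n → K) (i0 : Fin n) (c : Fin n → K) (z : K × K) :
    Matrix (Fin n) (Fin n) K × (Fin n → K) × (Fin n → K) :=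
  (diagonal lam, fun i => if i = i0 then z.1 else 1, fun i => if i = i0 then z.2 else c i)

lemma diag_conj_diag (lam : Fin n → K) (a b : Fin n → K) (hab : ∀ i, a i * b i = 1) :
    diagonal a * diagonal lam * diagonal b = diagonal lam := by
  rw [diagonal_mul_diagonal, diagonal_mul_diagonal]
  have h : (fun i => a i * lam i * b i) = lam := funext fun i => by
    rw [mul_comm (a i) (lam i), mul_assoc, hab i, mul_one]
  rw [h]

lemma act_dmap_base (lam : Fin n → K) (i0 : Fin n) (c : Fin n → K) (s : Kˣ) (z : K × K) :
    act19 (dmap i0 s) (base19 lam i0 c ((s⁻¹ : Kˣ) • z.1, s • z.2)) = base19 lam i0 c z := by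
  refine Prod.ext ?_ (Prod.ext ?_ ?_)
  · show ((dmap i0 s : GL (Fin n) K) : Matrix (Fin n) (Fin n) K) * diagonal lam
      * (((dmap i0 s)⁻¹ : GL (Fin n) K) : Matrix (Fin n) (Fin n) K) = diagonal lam
    rw [dmap_val, dmap_inv_val]
    apply diag_conj_diag
    intro i
    by_cases h : i = i0 <;> simp [h]
  · show ((dmap i0 s : GL (Fin n) K) : Matrix (Fin n) (Fin n) K).mulVec _ = _
    funext i
    rw [dmap_val, Matrix.mulVec_diagonal]
    show (if i = i0 then (s : K) else 1) * (if i = i0 then (s⁻¹ : Kˣ) • z.1 else 1)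
        = if i = i0 then z.1 else 1
    by_cases h : i = i0
    · simp only [if_pos h, Units.smul_def, smul_eq_mul]
      rw [← mul_assoc, Units.mul_inv, one_mul]
    · simp [if_neg h]
  · show Matrix.vecMul _ (((dmap i0 s)⁻¹ : GL (Fin n) K) : Matrix (Fin n) (Fin n) K) = _
    funext i
    rw [dmap_inv_val, Matrix.vecMul_diagonal]
    show (if i = i0 then s • z.2 else c i) * (if i = i0 then ((s⁻¹ : Kˣ) : K) else 1)
        = if i = i0 then z.2 else c i
    by_cases h : i = i0
    · simp only [if_pos h, Units.smul_def, smul_eq_mul]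
      rw [mul_comm (s : K) z.2, mul_assoc, Units.mul_inv, mul_one]
    · simp [if_neg h]

end S19

open S19 in
/-- When `r` vanishes at exactly one root `λ_{i₀}` of `f`, the variety of triples
`(x, v, v*)` with `charpoly x = f` and `v* adj(λI−x) v = r` is nonempty and is
`GL_n(K)`-equivariantly isomorphic to `(GL_n(K) × {XY = 0})/𝔾_m`, for a suitable
one-parameter subgroup of diagonal matrices. -/
theorem stmt_19 (K : Type*) [Field K] [IsAlgClosed K] (n : ℕ)
    (lam : Fin n → K) (hlam : Function.Injective lam) (i0 : Fin n)
    (f r : Polynomial K)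
    (hf : f = ∏ i, (Polynomial.X - Polynomial.C (lam i)))
    (hrdeg : r.degree < n)
    (hr0 : r.eval (lam i0) = 0)
    (hroots : ∀ i : Fin n, i ≠ i0 → r.eval (lam i) ≠ 0) :
    {p : Matrix (Fin n) (Fin n) K × (Fin n → K) × (Fin n → K) | cond19 f r p}.Nonempty ∧
      ∃ (d : Kˣ →* GL (Fin n) K)
        (π : GL (Fin n) K × {z : K × K // z.1 * z.2 = 0} →
          {p : Matrix (Fin n) (Fin n) K × (Fin n → K) × (Fin n → K) | cond19 f r p}),
        (∀ s : Kˣ, ∃ φ : Fin n → K,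
          ((d s : GL (Fin n) K) : Matrix (Fin n) (Fin n) K) = Matrix.diagonal φ) ∧
        Function.Surjective π ∧
        (∀ (g₀ : GL (Fin n) K) (p : GL (Fin n) K × {z : K × K // z.1 * z.2 = 0}),
          (π (g₀ * p.1, p.2) : Matrix (Fin n) (Fin n) K × (Fin n → K) × (Fin n → K)) =
            act19 g₀ (π p)) ∧
        (∀ p q : GL (Fin n) K × {z : K × K // z.1 * z.2 = 0},
          π p = π q ↔ ∃ s : Kˣ, q.1 = p.1 * d s ∧
            (q.2 : K × K).1 = (s⁻¹ : Kˣ) • (p.2 : K × K).1 ∧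
            (q.2 : K × K).2 = s • (p.2 : K × K).2) := by
  have hn : 0 < n := i0.pos
  set Δ : Fin n → K := fun i => ∏ j ∈ Finset.univ.erase i, (lam i - lam j) with hΔdef
  have hΔ : ∀ i, Δ i ≠ 0 := by
    intro i
    refine Finset.prod_ne_zero_iff.2 fun j hj => sub_ne_zero.2 fun hc => ?_
    exact (Finset.mem_erase.1 hj).1 (hlam hc).symm
  set c : Fin n → K := fun i => r.eval (lam i) / Δ i with hcdef
  have hc : ∀ i, c i * Δ i = r.eval (lam i) := fun i => div_mul_cancel₀ _ (hΔ i)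
  have hci0 : c i0 = 0 := by simp [hcdef, hr0]
  have hcne : ∀ i, i ≠ i0 → c i ≠ 0 := by
    intro i hi h0
    exact hroots i hi (by rw [← hc i, h0, zero_mul])
  -- base points satisfy the condition
  have hbase : ∀ z : K × K, z.1 * z.2 = 0 → cond19 f r (base19 lam i0 c z) := by
    intro z hz
    constructor
    · show (diagonal lam).charpoly = f
      rw [charpoly_diag, hf]
    · show (fun i => C ((fun i => if i = i0 then z.2 else c i) i)) ⬝ᵥ
        ((((X : Polynomial K) • (1 : Matrix (Fin n) (Fin n) (Polynomial K))
          - (diagonal lam).map C).adjugate).mulVec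
          (fun i => C ((fun i => if i = i0 then z.1 else 1) i))) = r
      rw [diag_bilin]
      apply lagrange_sum lam hlam hn r hrdeg
      intro i
      by_cases hi : i = i0
      · subst hi
        rw [if_pos rfl, if_pos rfl, show z.2 * z.1 = 0 from by rw [mul_comm]; exact hz,
          zero_mul, hr0]
      · simp only [if_neg hi, mul_one]
        exact hc i
  -- the map π
  set π : GL (Fin n) K × {z : K × K // z.1 * z.2 = 0} →
      {p : Matrix (Fin n) (Fin n) K × (Fin n → K) × (Fin n → K) | cond19 f r p} :=
    fun gz => ⟨act19 gz.1 (base19 lam i0 c gz.2.val),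
      cond19_act gz.1 _ (hbase gz.2.val gz.2.prop)⟩ with hπdef
  constructor
  · exact ⟨_, (π (1, ⟨(0, 0), by norm_num⟩)).prop⟩
  refine ⟨dmap i0, π, fun s => ⟨_, dmap_val i0 s⟩, ?_, ?_, ?_⟩
  · -- surjectivity
    rintro ⟨p, hp⟩
    obtain ⟨G, hxG⟩ := exists_conj_diagonal lam hlam p.1 (hp.1.trans hf)
    set p' := act19 G⁻¹ p with hp'def
    have hp' : cond19 f r p' := cond19_act G⁻¹ p hp
    have hp'1 : p'.1 = diagonal lam := by
      show ((G⁻¹ : GL (Fin n) K) : Matrix (Fin n) (Fin n) K) * p.1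
        * (((G⁻¹)⁻¹ : GL (Fin n) K) : Matrix (Fin n) (Fin n) K) = diagonal lam
      rw [inv_inv, hxG]
      simp only [Matrix.mul_assoc]
      rw [G.inv_mul, Matrix.mul_one, ← Matrix.mul_assoc, G.inv_mul, Matrix.one_mul]
    have hsum := hp'.2
    rw [hp'1, diag_bilin] at hsum
    have hcoef : ∀ k, p'.2.2 k * p'.2.1 k = c k := by
      intro k
      have h1 := sum_eval lam _ r hsum k
      exact mul_right_cancel₀ (hΔ k) (h1.trans (hc k).symm)
    have hv' : ∀ i, i ≠ i0 → p'.2.1 i ≠ 0 := by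
      intro i hi h0
      exact hcne i hi (by rw [← hcoef i, h0, mul_zero])
    set t : Fin n → K := fun i => if i = i0 then 1 else p'.2.1 i with htdef
    have ht : ∀ i, t i ≠ 0 := by
      intro i
      by_cases h : i = i0 <;> simp [htdef, h]
      exact hv' i h
    have hz0 : (p'.2.1 i0) * (p'.2.2 i0) = 0 := by
      rw [mul_comm, hcoef i0, hci0]
    refine ⟨(G * diagUnit t ht, ⟨(p'.2.1 i0, p'.2.2 i0), hz0⟩), ?_⟩
    apply Subtype.ext
    show act19 (G * diagUnit t ht) (base19 lam i0 c (p'.2.1 i0, p'.2.2 i0)) = p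
    have hT : act19 (diagUnit t ht) (base19 lam i0 c (p'.2.1 i0, p'.2.2 i0)) = p' := by
      refine Prod.ext ?_ (Prod.ext ?_ ?_)
      · show ((diagUnit t ht : GL (Fin n) K) : Matrix (Fin n) (Fin n) K) * diagonal lam
          * (((diagUnit t ht)⁻¹ : GL (Fin n) K) : Matrix (Fin n) (Fin n) K) = p'.1
        rw [diagUnit_val, diagUnit_inv_val, hp'1]
        exact diag_conj_diag lam t _ (fun i => mul_inv_cancel₀ (ht i))
      · show (diagonal t).mulVec (fun i => if i = i0 then p'.2.1 i0 else 1) = p'.2.1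
        funext i
        rw [Matrix.mulVec_diagonal]
        by_cases h : i = i0
        · subst h; simp [htdef]
        · simp [htdef, h]
      · show Matrix.vecMul (fun i => if i = i0 then p'.2.2 i0 else c i)
          (diagonal (fun i => (t i)⁻¹)) = p'.2.2
        funext i
        rw [Matrix.vecMul_diagonal]
        by_cases h : i = i0
        · subst h; simp [htdef]
        · simp only [if_neg h, htdef]
          rw [← hcoef i, mul_assoc, mul_inv_cancel₀ (hv' i h), mul_one]
    rw [← act19_mul, hT, hp'def, act19_mul, mul_inv_cancel, act19_one]
  · -- equivariance
    intro g₀ p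
    exact (act19_mul g₀ p.1 _).symm
  · -- fibers
    intro p q
    constructor
    · intro hpq
      have heq : act19 p.1 (base19 lam i0 c p.2.val) = act19 q.1 (base19 lam i0 c q.2.val) :=
        congrArg Subtype.val hpq
      have hk : base19 lam i0 c p.2.val = act19 (p.1⁻¹ * q.1) (base19 lam i0 c q.2.val) := by
        have h1 := congrArg (act19 p.1⁻¹) heq
        rwa [act19_mul, act19_mul, inv_mul_cancel, act19_one] at h1
      set k : GL (Fin n) K := p.1⁻¹ * q.1 with hkdef
      have h1 : diagonal lam = (k : Matrix (Fin n) (Fin n) K) * diagonal lam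
          * ((k⁻¹ : GL (Fin n) K) : Matrix (Fin n) (Fin n) K) := congrArg Prod.fst hk
      have hcomm : (k : Matrix (Fin n) (Fin n) K) * diagonal lam
          = diagonal lam * (k : Matrix (Fin n) (Fin n) K) := by
        have h2 := congrArg (· * (k : Matrix (Fin n) (Fin n) K)) h1
        simp only [Matrix.mul_assoc] at h2
        rw [k.inv_mul, Matrix.mul_one] at h2
        exact h2.symm
      have hdiag : (k : Matrix (Fin n) (Fin n) K)
          = diagonal (fun i => (k : Matrix (Fin n) (Fin n) K) i i) :=
        eq_diag_of_comm lam hlam _ hcomm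
      set φ : Fin n → K := fun i => (k : Matrix (Fin n) (Fin n) K) i i with hφdef
      have h2 : (fun i => if i = i0 then p.2.val.1 else 1)
          = (k : Matrix (Fin n) (Fin n) K).mulVec (fun i => if i = i0 then q.2.val.1 else 1) :=
        congrArg (fun x => x.2.1) hk
      have h2' : ∀ i, (if i = i0 then p.2.val.1 else 1)
          = φ i * (if i = i0 then q.2.val.1 else 1) := by
        intro i
        have := congrFun h2 i
        rwa [hdiag, Matrix.mulVec_diagonal] at this
      have hφ1 : ∀ i, i ≠ i0 → φ i = 1 := by
        intro i hi
        have := h2' i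
        rwa [if_neg hi, if_neg hi, mul_one, eq_comm] at this
      have hX : p.2.val.1 = φ i0 * q.2.val.1 := by
        have := h2' i0
        rwa [if_pos rfl, if_pos rfl] at this
      have h3 : (fun i => if i = i0 then p.2.val.2 else c i)
          = Matrix.vecMul (fun i => if i = i0 then q.2.val.2 else c i)
            ((k⁻¹ : GL (Fin n) K) : Matrix (Fin n) (Fin n) K) :=
        congrArg (fun x => x.2.2) hk
      have h3' : ∀ i, (if i = i0 then p.2.val.2 else c i) * φ i
          = (if i = i0 then q.2.val.2 else c i) := by
        intro i
        have h4 := congrArg (fun v => Matrix.vecMul v (k : Matrix (Fin n) (Fin n) K)) h3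
        simp only [Matrix.vecMul_vecMul] at h4
        rw [k.inv_mul, Matrix.vecMul_one] at h4
        have h5 := congrFun h4 i
        rw [hdiag] at h5
        rwa [Matrix.vecMul_diagonal] at h5
      have hY : p.2.val.2 * φ i0 = q.2.val.2 := by
        have := h3' i0
        rwa [if_pos rfl, if_pos rfl] at this
      have hφ0 : φ i0 ≠ 0 := by
        have hu : IsUnit (k : Matrix (Fin n) (Fin n) K).det :=
          (Matrix.isUnit_iff_isUnit_det _).1 k.isUnit
        rw [hdiag, Matrix.det_diagonal] at hu
        intro h0
        exact hu.ne_zero (Finset.prod_eq_zero (Finset.mem_univ i0) h0)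
      refine ⟨Units.mk0 (φ i0) hφ0, ?_, ?_, ?_⟩
      · have hkd : k = dmap i0 (Units.mk0 (φ i0) hφ0) := by
          apply Units.ext
          rw [show ((dmap i0 (Units.mk0 (φ i0) hφ0) : GL (Fin n) K) : Matrix (Fin n) (Fin n) K)
            = diagonal (fun i => if i = i0 then φ i0 else 1) from dmap_val i0 _, hdiag]
          have hfun : (fun i => if i = i0 then φ i0 else 1) = φ := funext fun i => by
            by_cases h : i = i0
            · rw [if_pos h, h]
            · rw [if_neg h, hφ1 i h]
          rw [hfun]
        rw [← hkd, hkdef, mul_inv_cancel_left]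
      · show q.2.val.1 = ((Units.mk0 (φ i0) hφ0)⁻¹ : Kˣ) • p.2.val.1
        rw [Units.smul_def, hX]
        show q.2.val.1 = (φ i0)⁻¹ * (φ i0 * q.2.val.1)
        rw [← mul_assoc, inv_mul_cancel₀ hφ0, one_mul]
      · show q.2.val.2 = (Units.mk0 (φ i0) hφ0 : Kˣ) • p.2.val.2
        rw [Units.smul_def, ← hY]
        show p.2.val.2 * φ i0 = φ i0 * p.2.val.2
        rw [mul_comm]
    · rintro ⟨s, hq1, hq2, hq3⟩
      apply Subtype.ext
      show act19 p.1 (base19 lam i0 c p.2.val) = act19 q.1 (base19 lam i0 c q.2.val)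
      have hz' : q.2.val = ((s⁻¹ : Kˣ) • p.2.val.1, s • p.2.val.2) := Prod.ext hq2 hq3
      rw [hq1, hz', ← act19_mul, act_dmap_base]
end
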